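/- arXiv:1101.3918 — 6 statements merged into one kernel-verified Lean document; each statement's English description precedes it below -/
import Mathlib

section
/- Let v be a weight function and g(x)=v(1-1/x). Suppose u is a real harmonic function on the open unit disk given by u(re^{iφ}) = Re ∑_{n=0}^∞ a_n r^n e^{inφ} (a_n ∈ ℂ, the series converging for 0 ≤ r < 1), and suppose there exists K > 0 such that u(z) ≤ K v(|z|) for all z in the unit disk. Then there exists a constant C > 0 (depending only on K and a_0) such that |a_n| ≤ C g(n) for all integers n ≥ 1. -/
/-!
On the circle `|z| = r` the function `u = Re ∑ aₘ zᵐ` has mean `Re a₀` and, for `n ≥ 1`,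
`n`-th Fourier coefficient `aₙ rⁿ / 2`: the conjugate series only has frequencies `≤ 0`.
Since `K v(r) - u ≥ 0` on that circle,
`π |aₙ| rⁿ = |∫ (u - K v(r)) e^{-inθ} dθ| ≤ ∫ (K v(r) - u) dθ = 2π (K v(r) - Re a₀)`.
Choosing `r = 1 - 1/n` for `n ≥ 2`, where `rⁿ ≥ e⁻²`, and `r = 1/2` for `n = 1` turns this into
`|aₙ| ≤ C v(1 - 1/n) = C g(n)`.
-/

open Complex Real intervalIntegral
open scoped ComplexConjugate

lemma integral_exp_int_mul_I (k : ℤ) :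
    ∫ θ in (0:ℝ)..2 * π, exp (k * θ * I) = if k = 0 then (2 * π : ℂ) else 0 := by
  split_ifs with hk
  · simp [hk]
  have hkI : (k : ℂ) * I ≠ 0 := mul_ne_zero (by exact_mod_cast hk) I_ne_zero
  simp_rw [mul_right_comm _ _ I]
  have : (k : ℂ) * I * ((2 * π : ℝ) : ℂ) = k * (2 * π * I) := by push_cast; ring
  rw [integral_exp_mul_complex hkI, this, exp_int_mul_two_pi_mul_I]
  simp

lemma summable_norm_mul_pow_of_summable {𝕜 : Type*} [NormedField 𝕜] {a : ℕ → 𝕜} {z : 𝕜}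
    (hz : Summable fun m => a m * z ^ m) {r : ℝ} (hr0 : 0 ≤ r) (hr : r < ‖z‖) :
    Summable fun m => ‖a m‖ * r ^ m := by
  have hz0 : 0 < ‖z‖ := hr0.trans_lt hr
  obtain ⟨C, hC⟩ := hz.tendsto_atTop_zero.norm.bddAbove_range
  refine .of_nonneg_of_le (fun m => by positivity) (fun m => ?_)
    ((summable_geometric_of_lt_one (by positivity) ((div_lt_one hz0).2 hr)).mul_left C)
  calc ‖a m‖ * r ^ m = ‖a m * z ^ m‖ * (r / ‖z‖) ^ m := by
        rw [norm_mul, norm_pow, div_pow, mul_assoc, mul_div_cancel₀ _ (by positivity)]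
    _ ≤ C * (r / ‖z‖) ^ m := by gcongr; exact hC ⟨m, rfl⟩

lemma exp_neg_two_le_one_sub_one_div_pow {m : ℕ} (hm : 2 ≤ m) :
    Real.exp (-2) ≤ (1 - 1 / m : ℝ) ^ m := by
  have hm' : (2 : ℝ) ≤ m := by exact_mod_cast hm
  have hx : 0 < (1 - 1 / m : ℝ) := by
    rw [sub_pos, div_lt_one (by linarith)]; linarith
  rw [← Real.exp_log (pow_pos hx m), Real.exp_le_exp, Real.log_pow]
  have hm1 : (0 : ℝ) < m - 1 := by linarith
  have hlog : -(1 / (m - 1)) ≤ Real.log (1 - 1 / m) := by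
    convert one_sub_inv_le_log_of_pos hx using 1
    field_simp
    ring
  have hbound : -2 ≤ (m : ℝ) * -(1 / (m - 1)) := by
    rw [mul_neg, mul_one_div, neg_le_neg_iff, div_le_iff₀ hm1]
    linarith
  exact hbound.trans (by gcongr)

noncomputable def circleSeries (a : ℕ → ℂ) (r θ : ℝ) : ℂ := ∑' m, a m * circleMap 0 r θ ^ m

section circleSeries

variable {a : ℕ → ℂ} {r : ℝ}

lemma norm_mul_circleMap_pow (hr : 0 ≤ r) (m : ℕ) (θ : ℝ) :
    ‖a m * circleMap 0 r θ ^ m‖ = ‖a m‖ * r ^ m := by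
  rw [norm_mul, norm_pow, norm_circleMap_zero, abs_of_nonneg hr]

variable (hr : 0 ≤ r) (ha : Summable fun m => ‖a m‖ * r ^ m)
include hr ha

lemma continuous_circleSeries : Continuous (circleSeries a r) :=
  continuous_tsum (fun m => by fun_prop) ha fun m θ => (norm_mul_circleMap_pow hr m θ).le

lemma hasSum_integral_circleSeries_mul_exp (k : ℤ) :
    HasSum (fun m : ℕ => if (m : ℤ) + k = 0 then 2 * π * (a m * r ^ m) else 0)
      (∫ θ in (0:ℝ)..2 * π, circleSeries a r θ * exp (k * θ * I)) := by
  have hterm (m : ℕ) : ∫ θ in (0:ℝ)..2 * π, a m * circleMap 0 r θ ^ m * exp (k * θ * I) =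
      if (m : ℤ) + k = 0 then 2 * π * (a m * r ^ m) else 0 := by
    have (θ : ℝ) : a m * circleMap 0 r θ ^ m * exp (k * θ * I) =
        a m * r ^ m * exp (((m + k : ℤ) : ℂ) * θ * I) := by
      rw [circleMap_zero_pow, circleMap_zero]
      push_cast
      rw [add_mul, add_mul, Complex.exp_add]
      ring
    simp_rw [this, integral_const_mul, integral_exp_int_mul_I]
    split_ifs <;> ring
  simp_rw [← hterm]
  refine hasSum_integral_of_dominated_convergence (fun m _ => ‖a m‖ * r ^ m)
    (fun m => by fun_prop) (fun m => .of_forall fun θ _ => ?_) (.of_forall fun _ _ => ha)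
    intervalIntegrable_const (.of_forall fun θ _ => ?_)
  · simp [norm_exp, abs_of_nonneg hr]
  · exact (ha.of_norm_bounded (fun m => (norm_mul_circleMap_pow hr m θ).le)).hasSum.mul_right _

lemma integral_circleSeries_mul_exp_neg (n : ℕ) :
    ∫ θ in (0:ℝ)..2 * π, circleSeries a r θ * exp (-(n * θ * I)) = 2 * π * (a n * r ^ n) := by
  have h := hasSum_integral_circleSeries_mul_exp hr ha (-n)
  simp only [← sub_eq_add_neg, sub_eq_zero, Nat.cast_inj, Int.cast_neg, Int.cast_natCast,
    neg_mul] at h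
  refine h.unique ?_
  convert hasSum_single n fun m hm => if_neg hm
  rw [if_pos rfl]

lemma integral_circleSeries_mul_exp {n : ℕ} (hn : 0 < n) :
    ∫ θ in (0:ℝ)..2 * π, circleSeries a r θ * exp (n * θ * I) = 0 := by
  have h := hasSum_integral_circleSeries_mul_exp hr ha n
  push_cast at h
  refine h.unique ?_
  convert hasSum_zero with m
  rw [if_neg (by omega)]

lemma integral_re_circleSeries_mul_exp_neg {n : ℕ} (hn : 0 < n) :
    ∫ θ in (0:ℝ)..2 * π, ((circleSeries a r θ).re : ℂ) * exp (-(n * θ * I)) =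
      π * (a n * r ^ n) := by
  have hf := continuous_circleSeries hr ha
  have hconj : ∫ θ in (0:ℝ)..2 * π, conj (circleSeries a r θ) * exp (-(n * θ * I)) = 0 := by
    have (θ : ℝ) : conj (circleSeries a r θ) * exp (-(n * θ * I)) =
        conj (circleSeries a r θ * exp (n * θ * I)) := by
      rw [map_mul, ← exp_conj]
      simp
    simp_rw [this, intervalIntegral_conj, integral_circleSeries_mul_exp hr ha hn, map_zero]
  have (θ : ℝ) : ((circleSeries a r θ).re : ℂ) * exp (-(n * θ * I)) =
      (circleSeries a r θ * exp (-(n * θ * I)) +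
        conj (circleSeries a r θ) * exp (-(n * θ * I))) / 2 := by
    rw [← add_mul, add_conj]
    push_cast
    ring
  simp_rw [this]
  rw [integral_div, integral_add (by apply Continuous.intervalIntegrable; fun_prop)
    (by apply Continuous.intervalIntegrable; fun_prop), hconj,
    integral_circleSeries_mul_exp_neg hr ha]
  ring

lemma integral_re_circleSeries :
    ∫ θ in (0:ℝ)..2 * π, (circleSeries a r θ).re = 2 * π * (a 0).re := by
  have h := integral_circleSeries_mul_exp_neg hr ha 0
  simp only [CharP.cast_eq_zero, zero_mul, neg_zero, Complex.exp_zero, mul_one, pow_zero] at h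
  have hre := intervalIntegral_re (μ := MeasureTheory.volume)
    ((continuous_circleSeries hr ha).intervalIntegrable 0 (2 * π))
  simp only [RCLike.re_to_complex] at hre
  rw [hre, h]
  simp

lemma norm_coeff_mul_pow_le {M : ℝ} (hM : ∀ θ, (circleSeries a r θ).re ≤ M) {n : ℕ}
    (hn : 0 < n) : ‖a n‖ * r ^ n ≤ 2 * (M - (a 0).re) := by
  have hf := continuous_circleSeries hr ha
  have hkey : ∫ θ in (0:ℝ)..2 * π, ((circleSeries a r θ).re - M : ℂ) * exp (-(n * θ * I)) =
      π * (a n * r ^ n) := by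
    simp_rw [sub_mul]
    rw [integral_sub (by apply Continuous.intervalIntegrable; fun_prop)
      (by apply Continuous.intervalIntegrable; fun_prop),
      integral_re_circleSeries_mul_exp_neg hr ha hn, integral_const_mul]
    have hexp := integral_exp_int_mul_I (-n)
    push_cast at hexp
    simp_rw [neg_mul] at hexp
    simp [hexp, hn.ne']
  have hnorm : π * (‖a n‖ * r ^ n) ≤ π * (2 * (M - (a 0).re)) :=
    calc π * (‖a n‖ * r ^ n) = ‖∫ θ in (0:ℝ)..2 * π,
          ((circleSeries a r θ).re - M : ℂ) * exp (-(n * θ * I))‖ := by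
          rw [hkey, norm_mul, norm_mul, norm_pow, norm_real, norm_real,
            Real.norm_of_nonneg pi_pos.le, Real.norm_of_nonneg hr]
      _ ≤ ∫ θ in (0:ℝ)..2 * π, (M - (circleSeries a r θ).re) := by
          refine (norm_integral_le_integral_norm (by positivity)).trans_eq
            (integral_congr fun θ _ => ?_)
          rw [norm_mul, ← ofReal_sub, norm_real, Real.norm_of_nonpos (by linarith [hM θ]),
            norm_exp]
          simp
      _ = π * (2 * (M - (a 0).re)) := by
          rw [integral_sub intervalIntegrable_const
              ((by fun_prop : Continuous fun θ => (circleSeries a r θ).re).intervalIntegrable _ _),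
            integral_const, integral_re_circleSeries hr ha]
          simp
          ring
  exact le_of_mul_le_mul_left hnorm pi_pos

end circleSeries

lemma norm_coeff_mul_pow_le_of_re_tsum_le {a : ℕ → ℂ}
    (hconv : ∀ z ∈ Metric.ball (0:ℂ) 1, Summable fun m => a m * z ^ m) {r : ℝ} (hr0 : 0 ≤ r)
    (hr1 : r < 1) {M : ℝ} (hM : ∀ z : ℂ, ‖z‖ = r → (∑' m, a m * z ^ m).re ≤ M) {n : ℕ}
    (hn : 0 < n) : ‖a n‖ * r ^ n ≤ 2 * (M - (a 0).re) := by
  have hmid : ‖(((1 + r) / 2 : ℝ) : ℂ)‖ = (1 + r) / 2 := by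
    rw [norm_real, Real.norm_of_nonneg (by linarith)]
  have ha := summable_norm_mul_pow_of_summable
    (hconv _ (by rw [mem_ball_zero_iff, hmid]; linarith)) hr0 (by rw [hmid]; linarith)
  refine norm_coeff_mul_pow_le hr0 ha (fun θ => hM _ ?_) hn
  rw [norm_circleMap_zero, abs_of_nonneg hr0]

lemma norm_coeff_mul_pow_le_of_le_mul_weight {a : ℕ → ℂ}
    (hconv : ∀ z ∈ Metric.ball (0:ℂ) 1, Summable fun m => a m * z ^ m) {u : ℂ → ℝ}
    (hu : ∀ z ∈ Metric.ball (0:ℂ) 1, u z = (∑' m, a m * z ^ m).re) {v : ℝ → ℝ} {K : ℝ}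
    (hbdd : ∀ z ∈ Metric.ball (0:ℂ) 1, u z ≤ K * v ‖z‖) {r : ℝ} (hr0 : 0 ≤ r) (hr1 : r < 1)
    (hv : 1 ≤ v r) {n : ℕ} (hn : 0 < n) : ‖a n‖ * r ^ n ≤ 2 * (K + ‖a 0‖) * v r := by
  have hM (z : ℂ) (hz : ‖z‖ = r) : (∑' m, a m * z ^ m).re ≤ K * v r := by
    have hz1 : z ∈ Metric.ball (0:ℂ) 1 := by rwa [mem_ball_zero_iff, hz]
    simpa [← hu z hz1, hz] using hbdd z hz1
  have := norm_coeff_mul_pow_le_of_re_tsum_le hconv hr0 hr1 hM hn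
  nlinarith [neg_le_of_abs_le (abs_re_le_norm (a 0)), norm_nonneg (a 0)]

theorem stmt_0_general
    (v : ℝ → ℝ)
    (hv_mono : StrictMonoOn v (Set.Ico (0:ℝ) 1))
    (hv_zero : v 0 = 1)
    (g : ℝ → ℝ) (hg : ∀ x, g x = v (1 - 1/x))
    (a : ℕ → ℂ)
    (hconv : ∀ z ∈ Metric.ball (0:ℂ) 1, Summable (fun m : ℕ => a m * z ^ m))
    (u : ℂ → ℝ)
    (hu : ∀ z ∈ Metric.ball (0:ℂ) 1, u z = (∑' m : ℕ, a m * z ^ m).re)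
    (K : ℝ) (hK : 0 < K)
    (hbdd : ∀ z ∈ Metric.ball (0:ℂ) 1, u z ≤ K * v ‖z‖) :
    ∃ C > 0, ∀ m : ℕ, 1 ≤ m → ‖a m‖ ≤ C * g m := by
  have hv_one_le {r : ℝ} (hr0 : 0 ≤ r) (hr1 : r < 1) : 1 ≤ v r :=
    hv_zero ▸ hv_mono.monotoneOn ⟨le_rfl, one_pos⟩ ⟨hr0, hr1⟩ hr0
  have hcoeff {r : ℝ} (hr0 : 0 ≤ r) (hr1 : r < 1) {n : ℕ} (hn : 0 < n) :=
    norm_coeff_mul_pow_le_of_le_mul_weight hconv hu hbdd hr0 hr1 (hv_one_le hr0 hr1) hn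
  have hv_half := hv_one_le (r := 1 / 2) (by norm_num) (by norm_num)
  have hX : 0 < K + ‖a 0‖ := by positivity
  refine ⟨2 * (K + ‖a 0‖) * (2 * v (1 / 2) + Real.exp 2), by positivity, fun m hm => ?_⟩
  obtain rfl | hm2 := hm.eq_or_lt
  · have h := hcoeff (r := 1 / 2) (by norm_num) (by norm_num) one_pos
    rw [pow_one] at h
    rw [hg, Nat.cast_one, div_one, sub_self, hv_zero]
    nlinarith [mul_pos hX (Real.exp_pos 2)]
  · set r : ℝ := 1 - 1 / m with hr
    have hm' : (2 : ℝ) ≤ m := by exact_mod_cast hm2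
    have hr0 : 0 ≤ r := by rw [hr, sub_nonneg, div_le_one (by linarith)]; linarith
    have hr1 : r < 1 := by rw [hr]; linarith [show (0 : ℝ) < 1 / m by positivity]
    have h := (mul_le_mul_of_nonneg_left (exp_neg_two_le_one_sub_one_div_pow hm2)
      (norm_nonneg (a m))).trans (hcoeff hr0 hr1 hm)
    rw [Real.exp_neg, ← div_eq_mul_inv, div_le_iff₀ (Real.exp_pos 2)] at h
    rw [hg, ← hr]
    nlinarith [mul_pos (mul_pos hX (by linarith : (0 : ℝ) < v (1 / 2)))
      (by linarith [hv_one_le hr0 hr1] : 0 < v r)]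

theorem stmt_0
    (v : ℝ → ℝ)
    (hv_pos : ∀ r ∈ Set.Ico (0:ℝ) 1, 0 < v r)
    (hv_mono : StrictMonoOn v (Set.Ico (0:ℝ) 1))
    (hv_cont : ContinuousOn v (Set.Ico (0:ℝ) 1))
    (hv_zero : v 0 = 1)
    (hv_top : Filter.Tendsto v (nhdsWithin 1 (Set.Iio (1:ℝ))) Filter.atTop)
    (g : ℝ → ℝ) (hg : ∀ x, g x = v (1 - 1/x))
    (a : ℕ → ℂ)
    (hconv : ∀ z ∈ Metric.ball (0:ℂ) 1, Summable (fun m : ℕ => a m * z ^ m))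
    (u : ℂ → ℝ)
    (hu : ∀ z ∈ Metric.ball (0:ℂ) 1, u z = (∑' m : ℕ, a m * z ^ m).re)
    (K : ℝ) (hK : 0 < K)
    (hbdd : ∀ z ∈ Metric.ball (0:ℂ) 1, u z ≤ K * v ‖z‖) :
    ∃ C > 0, ∀ m : ℕ, 1 ≤ m → ‖a m‖ ≤ C * g m :=
  stmt_0_general v hv_mono hv_zero g hg a hconv u hu K hK hbdd
end

section
/- Let v be a weight function satisfying the doubling condition, and let g(x)=v(1-1/x). Let (n_k)_{k≥1} be a Hadamard gap sequence with ratio λ > 1 and let a_{n_k} ∈ ℂ. Suppose there exists γ > 0 such that ∑_{k : n_k ≤ N} |a_{n_k}| ≤ γ g(N) for every positive integer N. Then the series u(z) = Re ∑_k a_{n_k} z^{n_k} converges for all z in the open unit disk and there exists C > 0 such that |u(z)| ≤ C v(|z|) for all z in the disk. -/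
/-!
Everything follows from the bound `∑ₖ |a_k| r^{n_k} ≤ C v(r)` for `r = |z|`. Writing
`r^n = (1 - r) ∑_{N ≥ n} r^N` (Abel summation) turns the left side into `(1 - r) ∑_N A(N) r^N`,
where `A(N) = ∑_{n_k ≤ N} |a_k| ≤ γ g(N)`. Iterating the doubling condition with `D ≤ 2^K` gives
polynomial growth, `g(N) ≤ (1 + D (N (1 - r))^K) g(1/(1 - r))`, and `g(1/(1 - r)) = v(r)`.
Finally `(1 - r)^{K+1} ∑_N N^K r^N ≤ K!`, because `N^K ≤ K! (N+K choose K)` and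
`∑_N (N+K choose K) r^N = (1 - r)^{-(K+1)}`.
-/

open Finset
open scoped Nat

section Doubling

variable {g : ℝ → ℝ} {D : ℝ}

lemma doubling_pow_le (hD : 0 ≤ D) (hdbl : ∀ x, 1 ≤ x → g (2 * x) ≤ D * g x) (j : ℕ) {y : ℝ}
    (hy : 1 ≤ y) : g (2 ^ j * y) ≤ D ^ j * g y := by
  induction j with
  | zero => simp
  | succ j ih =>
    have hj : 1 ≤ 2 ^ j * y := one_le_mul_of_one_le_of_one_le (one_le_pow₀ one_le_two) hy
    calc g (2 ^ (j + 1) * y) = g (2 * (2 ^ j * y)) := by ring_nf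
      _ ≤ D * g (2 ^ j * y) := hdbl _ hj
      _ ≤ D * (D ^ j * g y) := mul_le_mul_of_nonneg_left ih hD
      _ = D ^ (j + 1) * g y := by ring

lemma le_one_add_mul_div_pow_of_doubling (hmono : MonotoneOn g (Set.Ici 1)) (hD : 0 ≤ D)
    (hdbl : ∀ x, 1 ≤ x → g (2 * x) ≤ D * g x) {K : ℕ} (hK : D ≤ 2 ^ K) {x M : ℝ} (hx : 1 ≤ x)
    (hM : 1 ≤ M) (hgM : 0 ≤ g M) : g x ≤ (1 + D * (x / M) ^ K) * g M := by
  have hM0 : 0 < M := zero_lt_one.trans_le hM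
  rcases le_total x M with hxM | hMx
  · have : 0 ≤ D * (x / M) ^ K * g M := by positivity
    nlinarith [hmono hx hM hxM]
  · obtain ⟨j, hjx, hxj⟩ := exists_nat_pow_near ((one_le_div hM0).2 hMx) one_lt_two
    have hxj' : x ≤ 2 ^ (j + 1) * M := ((div_lt_iff₀ hM0).1 hxj).le
    have hDj : D ^ j ≤ (x / M) ^ K :=
      calc D ^ j ≤ (2 ^ K) ^ j := pow_le_pow_left₀ hD hK j
        _ = (2 ^ j) ^ K := by rw [← pow_mul, ← pow_mul, mul_comm]
        _ ≤ (x / M) ^ K := pow_le_pow_left₀ (by positivity) hjx K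
    calc g x ≤ g (2 ^ (j + 1) * M) :=
          hmono hx (hx.trans hxj') hxj'
      _ ≤ D ^ (j + 1) * g M := doubling_pow_le hD hdbl (j + 1) hM
      _ = D * D ^ j * g M := by ring
      _ ≤ D * (x / M) ^ K * g M := by gcongr
      _ ≤ (1 + D * (x / M) ^ K) * g M := by nlinarith

end Doubling

lemma tsum_pow_mul_geometric_le {r : ℝ} (hr0 : 0 ≤ r) (hr1 : r < 1) (K : ℕ) :
    ∑' N : ℕ, (N : ℝ) ^ K * r ^ N ≤ K ! / (1 - r) ^ (K + 1) := by
  have hr : ‖r‖ < 1 := by rwa [Real.norm_of_nonneg hr0]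
  have hpow (N : ℕ) : (N : ℝ) ^ K ≤ K ! * (N + K).choose K := by
    have : N ^ K ≤ K ! * (N + K).choose K := by
      rw [← Nat.descFactorial_eq_factorial_mul_choose]
      calc N ^ K ≤ (N + K + 1 - K) ^ K := Nat.pow_le_pow_left (by omega) K
        _ ≤ _ := Nat.pow_sub_le_descFactorial _ _
    exact_mod_cast this
  calc ∑' N : ℕ, (N : ℝ) ^ K * r ^ N ≤ ∑' N : ℕ, K ! * ((N + K).choose K * r ^ N) :=
        Summable.tsum_le_tsum
          (fun N => by rw [← mul_assoc]; exact mul_le_mul_of_nonneg_right (hpow N) (by positivity))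
          (summable_pow_mul_geometric_of_norm_lt_one K hr)
          ((summable_choose_mul_geometric_of_norm_lt_one K hr).mul_left _)
    _ = K ! / (1 - r) ^ (K + 1) := by
      have h := (hasSum_choose_mul_geometric_of_norm_lt_one (𝕜 := ℝ) K hr).mul_left (K ! : ℝ)
      rw [h.tsum_eq, mul_one_div]

lemma hasSum_ite_le_pow {r : ℝ} (hr0 : 0 ≤ r) (hr1 : r < 1) (n : ℕ) :
    HasSum (fun N => if n ≤ N then r ^ N else 0) (r ^ n / (1 - r)) := by
  rw [← hasSum_nat_add_iff' n]
  have hzero : ∑ i ∈ range n, (if n ≤ i then r ^ i else 0) = 0 :=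
    sum_eq_zero fun i hi => if_neg (by simpa using hi)
  simp only [hzero, sub_zero, le_add_iff_nonneg_left, zero_le, if_true, pow_add]
  simpa [div_eq_mul_inv, mul_comm] using (hasSum_geometric_of_lt_one hr0 hr1).mul_left (r ^ n)

lemma summable_one_add_mul_pow_mul_geometric {r : ℝ} (hr0 : 0 ≤ r) (hr1 : r < 1) (D s : ℝ)
    (K : ℕ) : Summable fun N : ℕ => (1 + D * (N * s) ^ K) * r ^ N := by
  have hr : ‖r‖ < 1 := by rwa [Real.norm_of_nonneg hr0]
  refine ((summable_geometric_of_lt_one hr0 hr1).add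
    ((summable_pow_mul_geometric_of_norm_lt_one K hr).mul_left (D * s ^ K))).congr fun N => ?_
  ring

lemma one_sub_mul_tsum_one_add_mul_pow_mul_geometric_le {r : ℝ} (hr0 : 0 ≤ r) (hr1 : r < 1)
    {D : ℝ} (hD : 0 ≤ D) (K : ℕ) :
    (1 - r) * ∑' N : ℕ, (1 + D * (N * (1 - r)) ^ K) * r ^ N ≤ 1 + D * (K ! : ℝ) := by
  have hr : ‖r‖ < 1 := by rwa [Real.norm_of_nonneg hr0]
  have hs : 0 < 1 - r := sub_pos.2 hr1
  have hsplit : ∑' N : ℕ, (1 + D * (N * (1 - r)) ^ K) * r ^ N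
      = ∑' N : ℕ, r ^ N + D * (1 - r) ^ K * ∑' N : ℕ, (N : ℝ) ^ K * r ^ N := by
    have hpow := summable_pow_mul_geometric_of_norm_lt_one K hr
    rw [← hpow.tsum_mul_left, ← (summable_geometric_of_lt_one hr0 hr1).tsum_add
      (hpow.mul_left (D * (1 - r) ^ K))]
    exact tsum_congr fun N => by rw [mul_pow]; ring
  have hbound := mul_le_mul_of_nonneg_left (tsum_pow_mul_geometric_le hr0 hr1 K)
    (by positivity : 0 ≤ D * (1 - r) ^ (K + 1))
  rw [hsplit, tsum_geometric_of_lt_one hr0 hr1, mul_add, mul_inv_cancel₀ hs.ne']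
  calc 1 + (1 - r) * (D * (1 - r) ^ K * ∑' N : ℕ, (N : ℝ) ^ K * r ^ N)
      = 1 + D * (1 - r) ^ (K + 1) * ∑' N : ℕ, (N : ℝ) ^ K * r ^ N := by ring
    _ ≤ 1 + D * (1 - r) ^ (K + 1) * (K ! / (1 - r) ^ (K + 1)) := by linarith
    _ = 1 + D * K ! := by field_simp

/-- Abel summation against the geometric weights `r ^ N`. -/
lemma sum_mul_pow_le_of_partialSum_le {c b : ℕ → ℝ} {n : ℕ → ℕ} {r : ℝ} (hc : ∀ k, 0 ≤ c k)
    (hn : ∀ k, k ≤ n k) (hr0 : 0 ≤ r) (hr1 : r < 1)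
    (hb : ∀ N, ∑ k ∈ range (N + 1) with n k ≤ N, c k ≤ b N)
    (hbs : Summable fun N => b N * r ^ N) (m : ℕ) :
    ∑ k ∈ range m, c k * r ^ n k ≤ (1 - r) * ∑' N, b N * r ^ N := by
  have hs : 0 < 1 - r := sub_pos.2 hr1
  have hsum : HasSum (fun N => (∑ k ∈ range m with n k ≤ N, c k) * r ^ N)
      ((∑ k ∈ range m, c k * r ^ n k) / (1 - r)) := by
    have hterm (N : ℕ) : (∑ k ∈ range m with n k ≤ N, c k) * r ^ N
        = ∑ k ∈ range m, c k * if n k ≤ N then r ^ N else 0 := by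
      rw [sum_filter, sum_mul]
      exact sum_congr rfl fun k _ => by split_ifs <;> simp
    simp only [hterm, sum_div, mul_div_assoc]
    exact hasSum_sum fun k _ => (hasSum_ite_le_pow hr0 hr1 (n k)).mul_left (c k)
  have hle (N : ℕ) : (∑ k ∈ range m with n k ≤ N, c k) * r ^ N ≤ b N * r ^ N := by
    refine mul_le_mul_of_nonneg_right ((sum_le_sum_of_subset_of_nonneg ?_ fun k _ _ => hc k).trans
      (hb N)) (pow_nonneg hr0 N)
    intro k hk
    simp only [mem_filter, mem_range] at hk ⊢
    exact ⟨by linarith [hn k], hk.2⟩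
  have := hasSum_le hle hsum hbs.hasSum
  rw [div_le_iff₀ hs] at this
  linarith

lemma sum_mul_pow_le_of_doubling {g : ℝ → ℝ} {D γ r : ℝ} {K : ℕ} {c : ℕ → ℝ} {n : ℕ → ℕ}
    (hmono : MonotoneOn g (Set.Ici 1)) (hD : 0 ≤ D) (hdbl : ∀ x, 1 ≤ x → g (2 * x) ≤ D * g x)
    (hK : D ≤ 2 ^ K) (hc : ∀ k, 0 ≤ c k) (hn : ∀ k, k < n k) (hγ : 0 ≤ γ)
    (hcoef : ∀ N : ℕ, 1 ≤ N → ∑ k ∈ range (N + 1) with n k ≤ N, c k ≤ γ * g N)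
    (hr0 : 0 ≤ r) (hr1 : r < 1) (hgr : 0 ≤ g (1 - r)⁻¹) (m : ℕ) :
    ∑ k ∈ range m, c k * r ^ n k ≤ γ * (1 + D * K !) * g (1 - r)⁻¹ := by
  have hs : 0 < 1 - r := sub_pos.2 hr1
  have hM : 1 ≤ (1 - r)⁻¹ := one_le_inv₀ hs |>.2 (by linarith)
  have hb (N : ℕ) : ∑ k ∈ range (N + 1) with n k ≤ N, c k
      ≤ γ * g (1 - r)⁻¹ * (1 + D * (N * (1 - r)) ^ K) := by
    rcases N.eq_zero_or_pos with rfl | hN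
    · rw [sum_eq_zero fun k hk => absurd (mem_filter.1 hk).2 (by have := hn k; omega)]
      positivity
    calc ∑ k ∈ range (N + 1) with n k ≤ N, c k ≤ γ * g N := hcoef N hN
      _ ≤ γ * ((1 + D * (N / (1 - r)⁻¹) ^ K) * g (1 - r)⁻¹) := by
          gcongr
          exact le_one_add_mul_div_pow_of_doubling hmono hD hdbl hK (by exact_mod_cast hN) hM hgr
      _ = γ * g (1 - r)⁻¹ * (1 + D * (N * (1 - r)) ^ K) := by rw [div_inv_eq_mul]; ring
  have hbs := (summable_one_add_mul_pow_mul_geometric hr0 hr1 D (1 - r) K).mul_left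
    (γ * g (1 - r)⁻¹)
  calc ∑ k ∈ range m, c k * r ^ n k
      ≤ (1 - r) * ∑' N : ℕ, γ * g (1 - r)⁻¹ * (1 + D * (N * (1 - r)) ^ K) * r ^ N :=
        sum_mul_pow_le_of_partialSum_le hc (fun k => (hn k).le) hr0 hr1 hb
          (hbs.congr fun N => by ring) m
    _ = γ * g (1 - r)⁻¹ * ((1 - r) * ∑' N : ℕ, (1 + D * (N * (1 - r)) ^ K) * r ^ N) := by
        simp only [mul_assoc, tsum_mul_left]
        ring
    _ ≤ γ * g (1 - r)⁻¹ * (1 + D * K !) := by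
        gcongr
        exact one_sub_mul_tsum_one_add_mul_pow_mul_geometric_le hr0 hr1 hD K
    _ = γ * (1 + D * K !) * g (1 - r)⁻¹ := by ring

lemma lt_apply_of_lacunary {n : ℕ → ℕ} {lam : ℝ} (hlam : 1 < lam) (hn : ∀ k, 0 < n k)
    (hgap : ∀ k, lam * (n k : ℝ) ≤ n (k + 1)) (k : ℕ) : k < n k := by
  induction k with
  | zero => exact hn 0
  | succ k ih =>
    have : (n k : ℝ) < n (k + 1) :=
      (lt_mul_of_one_lt_left (by exact_mod_cast hn k) hlam).trans_le (hgap k)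
    have : n k < n (k + 1) := by exact_mod_cast this
    omega

section Weight

variable {v : ℝ → ℝ}

lemma one_sub_one_div_mem_Ico {x : ℝ} (hx : 1 ≤ x) : 1 - 1 / x ∈ Set.Ico (0 : ℝ) 1 :=
  ⟨sub_nonneg.2 (div_le_one_of_le₀ hx (by linarith)), sub_lt_self 1 (one_div_pos.2 (by linarith))⟩

lemma MonotoneOn.comp_one_sub_one_div (hv : MonotoneOn v (Set.Ico 0 1)) :
    MonotoneOn (fun x => v (1 - 1 / x)) (Set.Ici 1) := fun _ hx _ hy hxy =>
  hv (one_sub_one_div_mem_Ico hx) (one_sub_one_div_mem_Ico hy)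
    (sub_le_sub_left (one_div_le_one_div_of_le (zero_lt_one.trans_le hx) hxy) 1)

lemma doubling_comp_one_sub_one_div {D : ℝ}
    (hdbl : ∀ d ∈ Set.Ioc (0 : ℝ) (1 / 2), v (1 - d) ≤ D * v (1 - 2 * d)) (x : ℝ) (hx : 1 ≤ x) :
    v (1 - 1 / (2 * x)) ≤ D * v (1 - 1 / x) := by
  have hd : 1 / (2 * x) ∈ Set.Ioc (0 : ℝ) (1 / 2) :=
    ⟨by positivity, one_div_le_one_div_of_le two_pos (by linarith)⟩
  convert hdbl _ hd using 4
  field_simp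

end Weight

lemma summable_and_norm_tsum_le_of_sum_range_norm_le {E : Type*} [NormedAddCommGroup E]
    [CompleteSpace E] {f : ℕ → E} {B : ℝ} (h : ∀ m, ∑ k ∈ range m, ‖f k‖ ≤ B) :
    Summable f ∧ ‖∑' k, f k‖ ≤ B := by
  have hs := summable_of_sum_range_le (fun k => norm_nonneg (f k)) h
  exact ⟨hs.of_norm, (norm_tsum_le_tsum_norm hs).trans
    (Real.tsum_le_of_sum_range_le (fun k => norm_nonneg (f k)) h)⟩

theorem stmt_2_general
    (v : ℝ → ℝ)
    (hv_pos : ∀ r ∈ Set.Ico (0:ℝ) 1, 0 < v r)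
    (hv_mono : StrictMonoOn v (Set.Ico (0:ℝ) 1))
    (D : ℝ) (hD : 1 < D)
    (hdbl : ∀ d ∈ Set.Ioc (0:ℝ) (1/2:ℝ), v (1 - d) ≤ D * v (1 - 2*d))
    (g : ℝ → ℝ) (hg : ∀ x, g x = v (1 - 1/x))
    (lam : ℝ) (hlam : 1 < lam)
    (n : ℕ → ℕ) (hn : ∀ k, 0 < n k)
    (hgap : ∀ k, lam * (n k : ℝ) ≤ (n (k+1) : ℝ))
    (a : ℕ → ℂ)
    (γ : ℝ) (hγ : 0 < γ)
    (hcoef : ∀ N : ℕ, 1 ≤ N →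
      ∑ k ∈ Finset.filter (fun k => n k ≤ N) (Finset.range (N + 1)),
        ‖a k‖ ≤ γ * g N) :
    (∀ z ∈ Metric.ball (0:ℂ) 1, Summable (fun k : ℕ => a k * z ^ (n k))) ∧
    ∃ C > 0, ∀ z ∈ Metric.ball (0:ℂ) 1,
      |(∑' k : ℕ, a k * z ^ (n k)).re| ≤ C * v ‖z‖ := by
  obtain rfl : g = fun x => v (1 - 1 / x) := funext hg
  obtain ⟨K, hK⟩ : ∃ K : ℕ, D ≤ 2 ^ K :=
    (pow_unbounded_of_one_lt D one_lt_two).imp fun _ => le_of_lt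
  have hbound (z : ℂ) (hz : z ∈ Metric.ball (0 : ℂ) 1) (m : ℕ) :
      ∑ k ∈ range m, ‖a k * z ^ n k‖ ≤ γ * (1 + D * K !) * v ‖z‖ := by
    have hz1 : ‖z‖ < 1 := by simpa using hz
    have hvz : v (1 - 1 / (1 - ‖z‖)⁻¹) = v ‖z‖ := by simp
    simp only [norm_mul, norm_pow]
    rw [← hvz]
    exact sum_mul_pow_le_of_doubling hv_mono.monotoneOn.comp_one_sub_one_div (by linarith)
      (doubling_comp_one_sub_one_div hdbl) hK (fun k => norm_nonneg (a k))
      (lt_apply_of_lacunary hlam hn hgap) hγ.le hcoef (norm_nonneg z) hz1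
      (hvz ▸ (hv_pos _ ⟨norm_nonneg z, hz1⟩).le) m
  refine ⟨fun z hz => (summable_and_norm_tsum_le_of_sum_range_norm_le (hbound z hz)).1,
    γ * (1 + D * K !), by positivity, fun z hz => ?_⟩
  exact (Complex.abs_re_le_norm _).trans
    (summable_and_norm_tsum_le_of_sum_range_norm_le (hbound z hz)).2

theorem stmt_2
    (v : ℝ → ℝ)
    (hv_pos : ∀ r ∈ Set.Ico (0:ℝ) 1, 0 < v r)
    (hv_mono : StrictMonoOn v (Set.Ico (0:ℝ) 1))
    (hv_cont : ContinuousOn v (Set.Ico (0:ℝ) 1))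
    (hv_zero : v 0 = 1)
    (hv_top : Filter.Tendsto v (nhdsWithin 1 (Set.Iio (1:ℝ))) Filter.atTop)
    (D : ℝ) (hD : 1 < D)
    (hdbl : ∀ d ∈ Set.Ioc (0:ℝ) (1/2:ℝ), v (1 - d) ≤ D * v (1 - 2*d))
    (g : ℝ → ℝ) (hg : ∀ x, g x = v (1 - 1/x))
    (lam : ℝ) (hlam : 1 < lam)
    (n : ℕ → ℕ) (hn : ∀ k, 0 < n k)
    (hgap : ∀ k, lam * (n k : ℝ) ≤ (n (k+1) : ℝ))
    (a : ℕ → ℂ)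
    (γ : ℝ) (hγ : 0 < γ)
    (hcoef : ∀ N : ℕ, 1 ≤ N →
      ∑ k ∈ Finset.filter (fun k => n k ≤ N) (Finset.range (N + 1)),
        ‖a k‖ ≤ γ * g N) :
    (∀ z ∈ Metric.ball (0:ℂ) 1, Summable (fun k : ℕ => a k * z ^ (n k))) ∧
    ∃ C > 0, ∀ z ∈ Metric.ball (0:ℂ) 1,
      |(∑' k : ℕ, a k * z ^ (n k)).re| ≤ C * v ‖z‖ :=
  stmt_2_general v hv_pos hv_mono D hD hdbl g hg lam hlam n hn hgap a γ hγ hcoef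
end

section
/- Let v be a weight function satisfying the doubling condition. Let (n_k)_{k≥1} be a Hadamard gap sequence with ratio λ > 1, let a_{n_k} ∈ ℂ, and suppose u(z) = Re ∑_k a_{n_k} z^{n_k} converges for all z in the open unit disk. Then the following are equivalent: (i) there exists K > 0 with u(z) ≤ K v(|z|) for all z in the disk; (ii) there exists K > 0 with |u(z)| ≤ K v(|z|) for all z in the disk. -/
/-!
Fix `z` with `r = ‖z‖ < 1` and put `b k = a k * r ^ n k`, so that the one-sided bound reads
`Re ∑ b k e^{i n_k θ} ≤ K v(r)` for all `θ`. If `λ^m ≥ 3`, every residue class `ι t = i + m t`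
of indices mod `m` has `3 n_{ι t} ≤ n_{ι (t+1)}`. Pair the series with the Riesz product
`P(θ) = ∏_{t<L} (1 + 2ε Re (w_t e^{i n_{ι t} θ}))`, where `w_t` is the phase of `b (ι t)`:
`P ≥ 0`, `P̂(0) = 1`, `P̂(-n_{ι t}) = ε w̄_t`, and because the frequencies `∑ ±n_{ι t}` are
distinct, every other coefficient of `P` has modulus at most `ε²`. Hence
`ε ∑_t ‖b (ι t)‖ ≤ K v(r) + ε² ∑_k ‖b k‖`; summing over the `m` classes with `ε = 1/(2m)`
gives `∑ ‖b k‖ ≤ 4 m² K v(r)`, which bounds `|u z|`.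
-/

open Complex LaurentPolynomial Finset
open scoped Real ComplexConjugate ComplexOrder

namespace Lacunary

lemma integral_circleExp_zpow (q : ℤ) :
    ∫ θ in (0)..2 * π, (Circle.exp θ : ℂ) ^ q = if q = 0 then ↑(2 * π) else 0 := by
  split_ifs with hq
  · simp [hq]
  · have hqI : (q : ℂ) * I ≠ 0 := by simp [hq, I_ne_zero]
    have hexp : ∀ θ : ℝ, (Circle.exp θ : ℂ) ^ q = exp (q * I * θ) := fun θ => by
      rw [← Circle.coe_zpow, ← Circle.exp_intCast_mul, Circle.coe_exp]; push_cast; ring_nf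
    simp_rw [hexp, integral_exp_mul_complex hqI]
    have : (q : ℂ) * I * ↑(2 * π) = q * (2 * π * I) := by push_cast; ring
    rw [this, exp_int_mul_two_pi_mul_I]
    simp

lemma coeff_C_mul_T (c : ℂ) (n q : ℤ) : (C c * T n).coeff q = if n = q then c else 0 := by
  rw [← single_eq_C_mul_T, AddMonoidAlgebra.coeff_single, Finsupp.single_apply, eq_comm]

lemma coeff_one_of_ne {q : ℤ} (hq : q ≠ 0) : (1 : ℂ[T;T⁻¹]).coeff q = 0 := by
  rw [AddMonoidAlgebra.one_def, AddMonoidAlgebra.coeff_single, Finsupp.single_apply, if_neg hq.symm]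

noncomputable def evalCircle (θ : ℝ) : ℂ[T;T⁻¹] →+* ℂ :=
  eval₂ (RingHom.id ℂ) (Circle.toUnits (Circle.exp θ))

lemma evalCircle_C_mul_T (θ : ℝ) (c : ℂ) (q : ℤ) :
    evalCircle θ (C c * T q) = c * (Circle.exp θ : ℂ) ^ q := by
  simp [evalCircle, eval₂_C_mul_T]

lemma continuous_circleExp_zpow (q : ℤ) : Continuous fun θ : ℝ => (Circle.exp θ : ℂ) ^ q :=
  Circle.exp.continuous.subtype_val.zpow₀ q fun _ => Or.inl (Circle.coe_ne_zero _)

lemma continuous_evalCircle (p : ℂ[T;T⁻¹]) : Continuous fun θ => evalCircle θ p := by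
  induction p using LaurentPolynomial.induction_on' with
  | add p q hp hq => simp_rw [map_add]; exact hp.add hq
  | C_mul_T n c =>
    simp_rw [evalCircle_C_mul_T]
    exact continuous_const.mul (continuous_circleExp_zpow n)

lemma integral_zpow_mul_evalCircle (p : ℂ[T;T⁻¹]) (m : ℤ) :
    ∫ θ in (0)..2 * π, (Circle.exp θ : ℂ) ^ m * evalCircle θ p = ↑(2 * π) * p.coeff (-m) := by
  induction p using LaurentPolynomial.induction_on' with
  | add p q hp hq =>
    have hint (r : ℂ[T;T⁻¹]) : IntervalIntegrable
        (fun θ : ℝ => (Circle.exp θ : ℂ) ^ m * evalCircle θ r) MeasureTheory.volume 0 (2 * π) :=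
      ((continuous_circleExp_zpow m).mul (continuous_evalCircle r)).intervalIntegrable _ _
    simp_rw [map_add, mul_add]
    rw [intervalIntegral.integral_add (hint p) (hint q), hp, hq, AddMonoidAlgebra.coeff_add,
      Finsupp.add_apply, mul_add]
  | C_mul_T n c =>
    simp_rw [evalCircle_C_mul_T, mul_left_comm _ c, ← zpow_add₀ (Circle.coe_ne_zero _)]
    rw [intervalIntegral.integral_const_mul, integral_circleExp_zpow, coeff_C_mul_T]
    have hiff : n = -m ↔ m + n = 0 := by omega
    simp only [hiff]
    split_ifs <;> ring

lemma norm_circleExp_pow (θ : ℝ) (k : ℕ) : ‖(Circle.exp θ : ℂ) ^ k‖ = 1 := by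
  rw [norm_pow, Circle.norm_coe, one_pow]

lemma summable_mul_circleExp_pow {b : ℕ → ℂ} (hb : Summable fun j => ‖b j‖) (n : ℕ → ℕ) (θ : ℝ) :
    Summable fun j => b j * (Circle.exp θ : ℂ) ^ n j :=
  .of_norm (by simpa [norm_circleExp_pow] using hb)

lemma continuous_tsum_mul_circleExp_pow {b : ℕ → ℂ} (hb : Summable fun j => ‖b j‖) (n : ℕ → ℕ) :
    Continuous fun θ : ℝ => ∑' j, b j * (Circle.exp θ : ℂ) ^ n j :=
  continuous_tsum (fun j => continuous_const.mul (Circle.exp.continuous.subtype_val.pow _)) hb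
    fun j θ => by rw [norm_mul, norm_circleExp_pow, mul_one]

lemma hasSum_integral_tsum_mul {b : ℕ → ℂ} (hb : Summable fun j => ‖b j‖) (n : ℕ → ℕ)
    {φ : ℝ → ℂ} (hφ : Continuous φ) :
    HasSum (fun j => b j * ∫ θ in (0)..2 * π, (Circle.exp θ : ℂ) ^ n j * φ θ)
      (∫ θ in (0)..2 * π, (∑' j, b j * (Circle.exp θ : ℂ) ^ n j) * φ θ) := by
  obtain ⟨B, hB⟩ := (isCompact_uIcc : IsCompact (Set.uIcc 0 (2 * π))).exists_bound_of_continuousOn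
    hφ.continuousOn
  simp_rw [← intervalIntegral.integral_const_mul, ← mul_assoc]
  refine intervalIntegral.hasSum_integral_of_dominated_convergence (fun j _ => ‖b j‖ * B)
    (fun j => (continuous_const.mul (Circle.exp.continuous.subtype_val.pow _)).mul hφ
      |>.aestronglyMeasurable) (fun j => .of_forall fun θ hθ => ?_)
    (.of_forall fun _ _ => hb.mul_right B) intervalIntegrable_const
    (.of_forall fun θ _ => (summable_mul_circleExp_pow hb n θ).hasSum.mul_right (φ θ))
  rw [norm_mul, norm_mul, norm_circleExp_pow, mul_one]
  exact mul_le_mul_of_nonneg_left (hB θ (Set.uIoc_subset_uIcc hθ)) (norm_nonneg _)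

lemma re_tsum_mul_coeff_le {b : ℕ → ℂ} (hb : Summable fun j => ‖b j‖) {n : ℕ → ℕ} {M : ℝ}
    (hM : ∀ θ : ℝ, (∑' j, b j * (Circle.exp θ : ℂ) ^ n j).re ≤ M) {p : ℂ[T;T⁻¹]}
    (hp : ∀ θ, 0 ≤ evalCircle θ p) :
    (∑' j, b j * p.coeff (-n j)).re ≤ M * (p.coeff 0).re := by
  have hp' (θ : ℝ) := nonneg_iff.1 (hp θ)
  set g := fun θ : ℝ => ∑' j, b j * (Circle.exp θ : ℂ) ^ n j
  have hg := continuous_tsum_mul_circleExp_pow hb n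
  have hΦ := continuous_evalCircle p
  have hpair : ∫ θ in (0)..2 * π, g θ * evalCircle θ p = ↑(2 * π) * ∑' j, b j * p.coeff (-n j) := by
    have hcoeff (j : ℕ) : ∫ θ in (0)..2 * π, (Circle.exp θ : ℂ) ^ n j * evalCircle θ p
        = ↑(2 * π) * p.coeff (-n j) := by
      simpa using integral_zpow_mul_evalCircle p (n j)
    have := (hasSum_integral_tsum_mul hb n hΦ).tsum_eq
    simp_rw [hcoeff, mul_left_comm _ (↑(2 * π) : ℂ)] at this
    rw [← this, tsum_mul_left]
  have hmass : ∫ θ in (0)..2 * π, evalCircle θ p = ↑(2 * π) * p.coeff 0 := by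
    simpa using integral_zpow_mul_evalCircle p 0
  have hre_integral {f : ℝ → ℂ} (hf : Continuous f) :
      ∫ θ in (0)..2 * π, (f θ).re = (∫ θ in (0)..2 * π, f θ).re :=
    intervalIntegral.intervalIntegral_re (hf.intervalIntegrable _ _)
  have hre : ∀ θ, (g θ * evalCircle θ p).re = (g θ).re * (evalCircle θ p).re := fun θ => by
    simp [mul_re, ← (hp' θ).2]
  have hscaled : 2 * π * (∑' j, b j * p.coeff (-n j)).re ≤ 2 * π * (M * (p.coeff 0).re) := by
    calc 2 * π * (∑' j, b j * p.coeff (-n j)).re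
        = ∫ θ in (0)..2 * π, (g θ).re * (evalCircle θ p).re := by
          rw [← re_ofReal_mul, ← hpair,
            ← hre_integral (f := fun θ => g θ * evalCircle θ p) (hg.mul hΦ)]
          simp only [hre]
      _ ≤ ∫ θ in (0)..2 * π, M * (evalCircle θ p).re :=
          intervalIntegral.integral_mono_on (by positivity)
            ((continuous_re.comp hg).mul (continuous_re.comp hΦ) |>.intervalIntegrable _ _)
            ((continuous_re.comp hΦ).const_smul M |>.intervalIntegrable _ _)
            fun θ _ => mul_le_mul_of_nonneg_right (hM θ) (hp' θ).1
      _ = 2 * π * (M * (p.coeff 0).re) := by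
          rw [intervalIntegral.integral_const_mul, hre_integral hΦ, hmass, re_ofReal_mul]
          ring
  exact le_of_mul_le_mul_left hscaled (by positivity)

noncomputable def rieszFactor (a : ℂ) (N : ℕ) : ℂ[T;T⁻¹] := 1 + C a * T N + C (conj a) * T (-N)

noncomputable def rieszProduct (N : ℕ → ℕ) (α : ℕ → ℂ) (L : ℕ) : ℂ[T;T⁻¹] :=
  ∏ t ∈ range L, rieszFactor (α t) (N t)

lemma evalCircle_rieszFactor (θ : ℝ) (a : ℂ) (N : ℕ) :
    evalCircle θ (rieszFactor a N) = ↑(1 + 2 * (a * (Circle.exp θ : ℂ) ^ N).re) := by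
  have hconj : (Circle.exp θ : ℂ) ^ (-(N : ℤ)) = conj ((Circle.exp θ : ℂ) ^ N) := by
    rw [zpow_neg, zpow_natCast, ← Circle.coe_pow, ← Circle.coe_inv, Circle.coe_inv_eq_conj]
  rw [rieszFactor, map_add, map_add, map_one, evalCircle_C_mul_T, evalCircle_C_mul_T, hconj,
    zpow_natCast, ← map_mul, add_assoc, add_conj]
  push_cast; ring

lemma evalCircle_rieszProduct_nonneg {N : ℕ → ℕ} {α : ℕ → ℂ} (hα : ∀ t, ‖α t‖ ≤ 1 / 2)
    (L : ℕ) (θ : ℝ) : 0 ≤ evalCircle θ (rieszProduct N α L) := by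
  simp_rw [rieszProduct, map_prod, evalCircle_rieszFactor, ← ofReal_prod]
  refine zero_le_real.2 (prod_nonneg fun t _ => ?_)
  have h := (abs_re_le_norm (α t * (Circle.exp θ : ℂ) ^ N t)).trans_eq
    (by rw [norm_mul, norm_circleExp_pow, mul_one])
  have := hα t
  linarith [(abs_le.1 h).1]

lemma coeff_mul_rieszFactor (p : ℂ[T;T⁻¹]) (a : ℂ) (N : ℕ) (q : ℤ) :
    (p * rieszFactor a N).coeff q = p.coeff q + a * p.coeff (q - N) + conj a * p.coeff (q + N) := by
  simp only [rieszFactor, mul_add, mul_one, ← single_eq_C_mul_T, AddMonoidAlgebra.coeff_add,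
    Finsupp.add_apply, AddMonoidAlgebra.coeff_mul_single_apply, neg_neg, ← sub_eq_add_neg]
  ring

lemma rieszProduct_coeff_eq_zero (N : ℕ → ℕ) (α : ℕ → ℂ) {L : ℕ} {q : ℤ}
    (hq : ∑ t ∈ range L, (N t : ℤ) < |q|) : (rieszProduct N α L).coeff q = 0 := by
  induction L generalizing q with
  | zero => exact coeff_one_of_ne (by rintro rfl; simp at hq)
  | succ L ih =>
    rw [sum_range_succ] at hq
    rw [rieszProduct, prod_range_succ, ← rieszProduct, coeff_mul_rieszFactor]
    rcases lt_abs.1 hq with hq | hq <;>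
    rw [ih (lt_abs.2 (by omega)), ih (lt_abs.2 (by omega)), ih (lt_abs.2 (by omega))] <;> ring

lemma coeff_mul_rieszFactor_eq_or {p : ℂ[T;T⁻¹]} {S : ℤ} (hp : ∀ q, S < |q| → p.coeff q = 0)
    {N : ℕ} (hN : 2 * S < N) (a : ℂ) (q : ℤ) :
    (p * rieszFactor a N).coeff q = p.coeff q ∨
      (p * rieszFactor a N).coeff q = a * p.coeff (q - N) ∨
      (p * rieszFactor a N).coeff q = conj a * p.coeff (q + N) := by
  rw [coeff_mul_rieszFactor]
  rcases le_or_gt |q| S with h | h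
  · have := abs_le.1 h
    left; rw [hp (q - N) (lt_abs.2 (by omega)), hp (q + N) (lt_abs.2 (by omega))]; ring
  rcases le_or_gt |q - N| S with h' | h'
  · have := abs_le.1 h'
    right; left; rw [hp q h, hp (q + N) (lt_abs.2 (by omega))]; ring
  · right; right; rw [hp q h, hp (q - N) h']; ring

lemma two_mul_sum_range_lt {N : ℕ → ℕ} (hN0 : 0 < N 0) (hN : ∀ t, 3 * N t ≤ N (t + 1)) (L : ℕ) :
    2 * ∑ t ∈ range L, (N t : ℤ) < N L := by
  induction L with
  | zero => simpa using hN0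
  | succ L ih => rw [sum_range_succ]; have := hN L; omega

section RieszCoefficients

variable {N : ℕ → ℕ} {α : ℕ → ℂ}

lemma rieszProduct_coeff_zero (hN0 : 0 < N 0) (hN : ∀ t, 3 * N t ≤ N (t + 1)) (L : ℕ) :
    (rieszProduct N α L).coeff 0 = 1 := by
  induction L with
  | zero => rw [rieszProduct, prod_range_zero, AddMonoidAlgebra.coeff_one_zero]
  | succ L ih =>
    have hS : 0 ≤ ∑ t ∈ range L, (N t : ℤ) := by positivity
    have hL := two_mul_sum_range_lt hN0 hN L
    rw [rieszProduct, prod_range_succ, ← rieszProduct, coeff_mul_rieszFactor, ih,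
      rieszProduct_coeff_eq_zero N α (lt_abs.2 (by omega)),
      rieszProduct_coeff_eq_zero N α (lt_abs.2 (by omega))]
    ring

lemma rieszProduct_coeff_neg (hN0 : 0 < N 0) (hN : ∀ t, 3 * N t ≤ N (t + 1)) {L t : ℕ}
    (ht : t < L) : (rieszProduct N α L).coeff (-N t) = conj (α t) := by
  induction L with
  | zero => omega
  | succ L ih =>
    have hS : 0 ≤ ∑ t ∈ range L, (N t : ℤ) := by positivity
    have hL := two_mul_sum_range_lt hN0 hN L
    rw [rieszProduct, prod_range_succ, ← rieszProduct, coeff_mul_rieszFactor]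
    rcases (Nat.lt_succ_iff_lt_or_eq.1 ht) with ht | rfl
    · have hNt : (N t : ℤ) ≤ ∑ t ∈ range L, (N t : ℤ) :=
        single_le_sum (f := fun t => (N t : ℤ)) (fun _ _ => by positivity) (mem_range.2 ht)
      rw [ih ht, rieszProduct_coeff_eq_zero N α (lt_abs.2 (by omega)),
        rieszProduct_coeff_eq_zero N α (lt_abs.2 (by omega))]
      ring
    · rw [neg_add_cancel, rieszProduct_coeff_zero hN0 hN,
        rieszProduct_coeff_eq_zero N α (lt_abs.2 (by omega)),
        rieszProduct_coeff_eq_zero N α (lt_abs.2 (by omega))]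
      ring

lemma norm_rieszProduct_coeff_le (hN0 : 0 < N 0) (hN : ∀ t, 3 * N t ≤ N (t + 1)) {ε : ℝ}
    (hα : ∀ t, ‖α t‖ ≤ ε) (hε : ε ≤ 1) (L : ℕ) {q : ℤ} (hq : q ≠ 0) :
    ‖(rieszProduct N α L).coeff q‖ ≤ ε := by
  have hε0 : 0 ≤ ε := (norm_nonneg _).trans (hα 0)
  induction L generalizing q with
  | zero => simpa [rieszProduct, coeff_one_of_ne hq] using hε0
  | succ L ih =>
    have hle_one (r : ℤ) : ‖(rieszProduct N α L).coeff r‖ ≤ 1 := by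
      rcases eq_or_ne r 0 with rfl | hr
      · simp [rieszProduct_coeff_zero hN0 hN]
      · exact (ih hr).trans hε
    have hL := two_mul_sum_range_lt hN0 hN L
    rw [rieszProduct, prod_range_succ, ← rieszProduct]
    rcases coeff_mul_rieszFactor_eq_or (fun r hr => rieszProduct_coeff_eq_zero N α hr) hL (α L) q
      with h | h | h <;> rw [h]
    · exact ih hq
    all_goals simpa [norm_mul] using mul_le_mul (hα L) (hle_one _) (norm_nonneg _) hε0

lemma norm_rieszProduct_coeff_le_sq (hN0 : 0 < N 0) (hN : ∀ t, 3 * N t ≤ N (t + 1)) {ε : ℝ}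
    (hα : ∀ t, ‖α t‖ ≤ ε) (hε : ε ≤ 1) (L : ℕ) {q : ℤ} (hq0 : q ≠ 0)
    (hq : ∀ t < L, q ≠ N t ∧ q ≠ -N t) : ‖(rieszProduct N α L).coeff q‖ ≤ ε ^ 2 := by
  have hε0 : 0 ≤ ε := (norm_nonneg _).trans (hα 0)
  induction L generalizing q with
  | zero => simpa [rieszProduct, coeff_one_of_ne hq0] using sq_nonneg ε
  | succ L ih =>
    have hL := two_mul_sum_range_lt hN0 hN L
    obtain ⟨hqL, hqL'⟩ := hq L (by omega)
    rw [rieszProduct, prod_range_succ, ← rieszProduct]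
    rcases coeff_mul_rieszFactor_eq_or (fun r hr => rieszProduct_coeff_eq_zero N α hr) hL (α L) q
      with h | h | h <;> rw [h]
    · exact ih hq0 fun t ht => hq t (by omega)
    · rw [sq, norm_mul]
      exact mul_le_mul (hα L) (norm_rieszProduct_coeff_le hN0 hN hα hε L (sub_ne_zero.2 hqL))
        (norm_nonneg _) hε0
    · rw [sq, norm_mul, norm_conj]
      exact mul_le_mul (hα L) (norm_rieszProduct_coeff_le hN0 hN hα hε L (by omega))
        (norm_nonneg _) hε0

end RieszCoefficients

lemma mul_conj_ofReal_mul_div_norm (z : ℂ) (ε : ℝ) : z * conj (ε * (z / ‖z‖)) = ε * ‖z‖ := by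
  rcases eq_or_ne z 0 with rfl | hz
  · simp
  · have : (‖z‖ : ℂ) ≠ 0 := by simpa using hz
    rw [map_mul, map_div₀, conj_ofReal, conj_ofReal, mul_left_comm, mul_div_assoc', mul_conj', sq,
      mul_div_cancel_right₀ _ this]

lemma mul_sum_norm_le_of_evalCircle_nonneg {b : ℕ → ℂ} (hb : Summable fun j => ‖b j‖)
    {n : ℕ → ℕ} {M : ℝ} (hM : ∀ θ : ℝ, (∑' j, b j * (Circle.exp θ : ℂ) ^ n j).re ≤ M)
    {p : ℂ[T;T⁻¹]} (hp : ∀ θ, 0 ≤ evalCircle θ p) (hp0 : p.coeff 0 = 1) {F : Finset ℕ} {ε : ℝ}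
    (hF : ∀ j ∈ F, b j * p.coeff (-n j) = ε * ‖b j‖) (hFc : ∀ j ∉ F, ‖p.coeff (-n j)‖ ≤ ε ^ 2) :
    ε * ∑ j ∈ F, ‖b j‖ ≤ M + ε ^ 2 * ∑' j, ‖b j‖ := by
  have hbound (j : ℕ) (hj : j ∉ F) : ‖b j * p.coeff (-n j)‖ ≤ ε ^ 2 * ‖b j‖ := by
    rw [norm_mul, mul_comm]; exact mul_le_mul_of_nonneg_right (hFc j hj) (norm_nonneg _)
  have hsum : Summable fun j => b j * p.coeff (-n j) :=
    .of_norm_bounded_eventually (hb.mul_left _) (F.eventually_cofinite_notMem.mono hbound)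
  have hlower (j : ℕ) :
      ε * (F : Set ℕ).indicator (‖b ·‖) j - ε ^ 2 * ‖b j‖ ≤ (b j * p.coeff (-n j)).re := by
    by_cases hj : j ∈ F
    · rw [Set.indicator_of_mem hj, hF j hj, ← ofReal_mul, ofReal_re]
      exact sub_le_self _ (by positivity)
    · rw [Set.indicator_of_notMem hj, mul_zero, zero_sub, neg_le]
      exact (neg_le_abs _).trans ((abs_re_le_norm _).trans (hbound j hj))
  have hre : (∑' j, b j * p.coeff (-n j)).re ≤ M := by
    simpa [hp0] using re_tsum_mul_coeff_le hb hM hp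
  calc ε * ∑ j ∈ F, ‖b j‖
      = ∑' j, (ε * (F : Set ℕ).indicator (‖b ·‖) j - ε ^ 2 * ‖b j‖) + ε ^ 2 * ∑' j, ‖b j‖ := by
        rw [Summable.tsum_sub ((hb.indicator _).mul_left ε) (hb.mul_left _), tsum_mul_left,
          tsum_mul_left, ← sum_eq_tsum_indicator]
        ring
    _ ≤ ∑' j, (b j * p.coeff (-n j)).re + ε ^ 2 * ∑' j, ‖b j‖ :=
        add_le_add_left (Summable.tsum_le_tsum hlower
          (((hb.indicator _).mul_left ε).sub (hb.mul_left _)) (reCLM.summable hsum)) _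
    _ ≤ M + ε ^ 2 * ∑' j, ‖b j‖ := by rw [← re_tsum hsum]; gcongr

lemma mul_tsum_norm_comp_le {b : ℕ → ℂ} (hb : Summable fun j => ‖b j‖) {n : ℕ → ℕ}
    (hn_inj : Function.Injective n) (hn_pos : ∀ j, 0 < n j) {M : ℝ}
    (hM : ∀ θ : ℝ, (∑' j, b j * (Circle.exp θ : ℂ) ^ n j).re ≤ M) {ι : ℕ → ℕ}
    (hι : Function.Injective ι) (hgap : ∀ t, 3 * n (ι t) ≤ n (ι (t + 1))) {ε : ℝ} (hε0 : 0 ≤ ε)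
    (hε : ε ≤ 1 / 2) : ε * ∑' t, ‖b (ι t)‖ ≤ M + ε ^ 2 * ∑' j, ‖b j‖ := by
  rw [← tsum_mul_left]
  refine Real.tsum_le_of_sum_range_le (fun t => by positivity) fun L => ?_
  -- `z / ‖z‖` is the phase of `z`, and `0` when `z = 0`
  set α : ℕ → ℂ := fun t => ε * (b (ι t) / ‖b (ι t)‖)
  have hα (t : ℕ) : ‖α t‖ ≤ ε := by
    rw [norm_mul, norm_real, Real.norm_of_nonneg hε0, norm_div, norm_real, norm_norm]
    exact mul_le_of_le_one_right hε0 (div_self_le_one _)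
  have hN0 : 0 < (n ∘ ι) 0 := hn_pos _
  rw [← mul_sum, ← sum_image (f := fun j => ‖b j‖) hι.injOn]
  refine mul_sum_norm_le_of_evalCircle_nonneg hb hM (p := rieszProduct (n ∘ ι) α L)
    (evalCircle_rieszProduct_nonneg (fun t => (hα t).trans hε) L)
    (rieszProduct_coeff_zero hN0 hgap L) (fun j hj => ?_) (fun j hj => ?_)
  · obtain ⟨t, ht, rfl⟩ := mem_image.1 hj
    rw [← Function.comp_apply (f := n), rieszProduct_coeff_neg hN0 hgap (mem_range.1 ht),
      mul_conj_ofReal_mul_div_norm]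
  · have hj0 := hn_pos j
    refine norm_rieszProduct_coeff_le_sq hN0 hgap hα (by linarith) L (by omega)
      fun t ht => ⟨by omega, fun h => hj (mem_image.2 ⟨t, mem_range.2 ht, hn_inj ?_⟩)⟩
    simp only [Function.comp_apply] at h; omega

lemma tsum_norm_le_of_re_le {b : ℕ → ℂ} (hb : Summable fun j => ‖b j‖) {n : ℕ → ℕ}
    (hn_inj : Function.Injective n) (hn_pos : ∀ j, 0 < n j) {m : ℕ} (hm : 0 < m)
    (hgap : ∀ k, 3 * n k ≤ n (k + m)) {M : ℝ}
    (hM : ∀ θ : ℝ, (∑' j, b j * (Circle.exp θ : ℂ) ^ n j).re ≤ M) :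
    ∑' j, ‖b j‖ ≤ 4 * m ^ 2 * M := by
  have : NeZero m := ⟨hm.ne'⟩
  set S := ∑' j, ‖b j‖
  have hm' : (1 : ℝ) ≤ m := by exact_mod_cast hm
  have hclass (i : ZMod m) : ∑' t, ‖b (i.val + m * t)‖ ≤ 2 * m * M + S / (2 * m) := by
    have := mul_tsum_norm_comp_le hb hn_inj hn_pos hM (ι := fun t => i.val + m * t)
      (fun s t h => Nat.eq_of_mul_eq_mul_left hm (Nat.add_left_cancel h))
      (fun t => by rw [mul_add, mul_one, ← add_assoc]; exact hgap _)
      (ε := 1 / (2 * m)) (by positivity) (by field_simp; linarith)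
    field_simp at this ⊢
    linarith
  have : S ≤ 2 * m ^ 2 * M + S / 2 := by
    calc S = ∑ i : ZMod m, ∑' t, ‖b (i.val + m * t)‖ := Nat.sumByResidueClasses hb m
      _ ≤ ∑ _i : ZMod m, (2 * m * M + S / (2 * m)) := sum_le_sum fun i _ => hclass i
      _ = 2 * m ^ 2 * M + S / 2 := by
        rw [sum_const, card_univ, ZMod.card, nsmul_eq_mul]; field_simp
  linarith

lemma strictMono_of_gap {lam : ℝ} (hlam : 1 < lam) {n : ℕ → ℕ} (hn : ∀ k, 0 < n k)
    (hgap : ∀ k, lam * n k ≤ n (k + 1)) : StrictMono n :=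
  strictMono_nat_of_lt_succ fun k => by
    exact_mod_cast (lt_mul_of_one_lt_left (by exact_mod_cast hn k) hlam).trans_le (hgap k)

lemma exists_three_mul_le_of_gap {lam : ℝ} (hlam : 1 < lam) {n : ℕ → ℕ}
    (hgap : ∀ k, lam * n k ≤ n (k + 1)) : ∃ m, 0 < m ∧ ∀ k, 3 * n k ≤ n (k + m) := by
  have hiter (k t : ℕ) : lam ^ t * n k ≤ n (k + t) := by
    induction t with
    | zero => simp
    | succ t ih =>
      rw [pow_succ', mul_assoc, ← add_assoc]
      exact (mul_le_mul_of_nonneg_left ih (by linarith)).trans (hgap _)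
  obtain ⟨m, hm⟩ := pow_unbounded_of_one_lt (3 : ℝ) hlam
  refine ⟨m, Nat.pos_of_ne_zero fun h => by norm_num [h] at hm, fun k => ?_⟩
  exact_mod_cast (mul_le_mul_of_nonneg_right hm.le (Nat.cast_nonneg _)).trans (hiter k m)

lemma summable_norm_mul_pow {a : ℕ → ℂ} {n : ℕ → ℕ} (hn : StrictMono n)
    (hconv : ∀ z ∈ Metric.ball (0 : ℂ) 1, Summable fun k => a k * z ^ n k) {z : ℂ}
    (hz : ‖z‖ < 1) : Summable fun k => ‖a k * z ^ n k‖ := by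
  obtain ⟨ρ, hzρ, hρ1⟩ := exists_between hz
  have hρ : 0 < ρ := (norm_nonneg z).trans_lt hzρ
  have hρ_mem : (ρ : ℂ) ∈ Metric.ball (0 : ℂ) 1 := by simpa [abs_of_pos hρ] using hρ1
  obtain ⟨B, hB⟩ := (hconv ρ hρ_mem).tendsto_atTop_zero.norm.bddAbove_range
  have hs : ‖z‖ / ρ < 1 := (div_lt_one hρ).2 hzρ
  refine .of_nonneg_of_le (fun _ => norm_nonneg _) (fun k => ?_)
    ((summable_geometric_of_lt_one (by positivity) hs).mul_left B)
  calc ‖a k * z ^ n k‖ = ‖a k * (ρ : ℂ) ^ n k‖ * (‖z‖ / ρ) ^ n k := by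
        simp only [norm_mul, norm_pow, norm_real, Real.norm_of_nonneg hρ.le, div_pow]
        field_simp
    _ ≤ B * (‖z‖ / ρ) ^ k :=
        mul_le_mul (hB ⟨k, rfl⟩) (pow_le_pow_of_le_one (by positivity) hs.le (hn.id_le k))
          (by positivity) ((norm_nonneg _).trans (hB ⟨0, rfl⟩))

end Lacunary

open Lacunary

theorem stmt_3_general
    (v : ℝ → ℝ)
    (lam : ℝ) (hlam : 1 < lam)
    (n : ℕ → ℕ) (hn : ∀ k, 0 < n k)
    (hgap : ∀ k, lam * (n k : ℝ) ≤ (n (k+1) : ℝ))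
    (a : ℕ → ℂ)
    (hconv : ∀ z ∈ Metric.ball (0:ℂ) 1, Summable (fun k : ℕ => a k * z ^ (n k)))
    (u : ℂ → ℝ)
    (hu : ∀ z ∈ Metric.ball (0:ℂ) 1, u z = (∑' k : ℕ, a k * z ^ (n k)).re) :
    (∃ K > 0, ∀ z ∈ Metric.ball (0:ℂ) 1, u z ≤ K * v ‖z‖) ↔
    (∃ K > 0, ∀ z ∈ Metric.ball (0:ℂ) 1, |u z| ≤ K * v ‖z‖) := by
  refine ⟨fun ⟨K, hK, hKu⟩ => ?_,
    fun ⟨K, hK, hKu⟩ => ⟨K, hK, fun z hz => (le_abs_self _).trans (hKu z hz)⟩⟩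
  have hmono := strictMono_of_gap hlam hn hgap
  obtain ⟨m, hm, hm3⟩ := exists_three_mul_le_of_gap hlam hgap
  refine ⟨4 * m ^ 2 * K, by positivity, fun z hz => ?_⟩
  have hr : ‖z‖ < 1 := mem_ball_zero_iff.1 hz
  have hsum := summable_norm_mul_pow hmono hconv hr
  set b : ℕ → ℂ := fun k => a k * (‖z‖ : ℂ) ^ n k
  have hb : Summable fun k => ‖b k‖ := by simpa [b, norm_mul, norm_pow] using hsum
  have hM (θ : ℝ) : (∑' k, b k * (Circle.exp θ : ℂ) ^ n k).re ≤ K * v ‖z‖ := by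
    have hz' : (‖z‖ : ℂ) * Circle.exp θ ∈ Metric.ball (0 : ℂ) 1 := by simpa [norm_mul] using hr
    have h := hKu _ hz'
    rw [hu _ hz'] at h
    simpa [b, mul_pow, mul_assoc, norm_mul] using h
  calc |u z| ≤ ‖∑' k, a k * z ^ n k‖ := hu z hz ▸ abs_re_le_norm _
    _ ≤ ∑' k, ‖b k‖ := by simpa [b, norm_mul, norm_pow] using norm_tsum_le_tsum_norm hsum
    _ ≤ 4 * m ^ 2 * (K * v ‖z‖) := tsum_norm_le_of_re_le hb hmono.injective hn hm hm3 hM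
    _ = 4 * m ^ 2 * K * v ‖z‖ := by ring

theorem stmt_3
    (v : ℝ → ℝ)
    (hv_pos : ∀ r ∈ Set.Ico (0:ℝ) 1, 0 < v r)
    (hv_mono : StrictMonoOn v (Set.Ico (0:ℝ) 1))
    (hv_cont : ContinuousOn v (Set.Ico (0:ℝ) 1))
    (hv_zero : v 0 = 1)
    (hv_top : Filter.Tendsto v (nhdsWithin 1 (Set.Iio (1:ℝ))) Filter.atTop)
    (D : ℝ) (hD : 1 < D)
    (hdbl : ∀ d ∈ Set.Ioc (0:ℝ) (1/2:ℝ), v (1 - d) ≤ D * v (1 - 2*d))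
    (lam : ℝ) (hlam : 1 < lam)
    (n : ℕ → ℕ) (hn : ∀ k, 0 < n k)
    (hgap : ∀ k, lam * (n k : ℝ) ≤ (n (k+1) : ℝ))
    (a : ℕ → ℂ)
    (hconv : ∀ z ∈ Metric.ball (0:ℂ) 1, Summable (fun k : ℕ => a k * z ^ (n k)))
    (u : ℂ → ℝ)
    (hu : ∀ z ∈ Metric.ball (0:ℂ) 1, u z = (∑' k : ℕ, a k * z ^ (n k)).re) :
    (∃ K > 0, ∀ z ∈ Metric.ball (0:ℂ) 1, u z ≤ K * v ‖z‖) ↔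
    (∃ K > 0, ∀ z ∈ Metric.ball (0:ℂ) 1, |u z| ≤ K * v ‖z‖) :=
  stmt_3_general v lam hlam n hn hgap a hconv u hu
end

section
/- Let v be a weight function satisfying the doubling condition. Let f(z) = ∑_k a_{n_k} z^{n_k} be a holomorphic function on the open unit disk whose exponents (n_k) form a Hadamard gap sequence with ratio λ > 1. If there exists K > 0 with Re f(z) ≤ K v(|z|) for all z in the disk, then there exists C > 0 such that both |Re f(z)| ≤ C v(|z|) and |Im f(z)| ≤ C v(|z|) for all z in the disk. -/
/-!
Riesz products. If the exponents `ν k`, `k ∈ F`, grow fast enough, then for `‖c k‖ ≤ 1` the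
trigonometric polynomial `P θ = ∏ k ∈ F, (1 + Re (c k * e^{i ν_k θ}))` is nonnegative, has mean
`1`, and its moment against `e^{i ν_j θ}` is `π * conj (c j)` for `j ∈ F` and `0` for `j ∉ F`.
Taking `A k = a k * z ^ n k` and `c k = A k / ‖A k‖`, integrating `Re f (z e^{iθ}) ≤ K v(‖z‖)`
against `P` gives `∑ k ∈ F, ‖A k‖ ≤ 2 K v(‖z‖)`. A Hadamard sequence splits into `m` residue
classes on which the exponents grow fast enough, so `‖f z‖ ≤ ∑ ‖A k‖ ≤ 2 m K v(‖z‖)`.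
-/

open Complex ComplexConjugate Finset Real

noncomputable def circleExp (q : ℤ) (θ : ℝ) : ℂ := cexp (q * θ * I)

@[fun_prop]
lemma continuous_circleExp (q : ℤ) : Continuous (circleExp q) := by
  unfold circleExp; fun_prop

lemma circleExp_add (p q : ℤ) (θ : ℝ) : circleExp (p + q) θ = circleExp p θ * circleExp q θ := by
  simp only [circleExp, ← Complex.exp_add]
  push_cast
  ring_nf

lemma norm_circleExp (q : ℤ) (θ : ℝ) : ‖circleExp q θ‖ = 1 := by
  rw [circleExp, show (q : ℂ) * θ * I = ((q * θ : ℝ) : ℂ) * I by push_cast; ring,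
    norm_exp_ofReal_mul_I]

lemma conj_circleExp (q : ℤ) (θ : ℝ) : conj (circleExp q θ) = circleExp (-q) θ := by
  rw [circleExp, circleExp, ← Complex.exp_conj]
  simp

lemma pow_mul_circleExp (z : ℂ) (n : ℕ) (θ : ℝ) :
    (z * cexp (θ * I)) ^ n = z ^ n * circleExp n θ := by
  rw [mul_pow, ← Complex.exp_nat_mul, circleExp]
  push_cast
  ring_nf

lemma integral_circleExp (q : ℤ) :
    ∫ θ in (0 : ℝ)..2 * π, circleExp q θ = if q = 0 then (2 * π : ℂ) else 0 := by
  split_ifs with hq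
  · simp [hq, circleExp]
  · have hqI : (q : ℂ) * I ≠ 0 := by simp [hq]
    simp only [circleExp, show ∀ θ : ℝ, (q : ℂ) * θ * I = q * I * θ from fun θ => by ring]
    rw [integral_exp_mul_complex hqI,
      show (q : ℂ) * I * ↑(2 * π) = q * (2 * π * I) by push_cast; ring, exp_int_mul_two_pi_mul_I]
    simp

lemma ofReal_re_mul_circleExp (c : ℂ) (ν : ℤ) (θ : ℝ) :
    (((c * circleExp ν θ).re : ℝ) : ℂ) = c / 2 * circleExp ν θ + conj c / 2 * circleExp (-ν) θ := by
  rw [re_eq_add_conj, map_mul, conj_circleExp]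
  ring

noncomputable def circleMoment (P : ℝ → ℝ) (q : ℤ) : ℂ :=
  ∫ θ in (0 : ℝ)..2 * π, P θ * circleExp q θ

lemma circleMoment_one (q : ℤ) :
    circleMoment 1 q = if q = 0 then (2 * π : ℂ) else 0 := by
  simp only [circleMoment, Pi.one_apply, ofReal_one, one_mul, integral_circleExp]

lemma circleMoment_mul_rieszFactor {P : ℝ → ℝ} (hP : Continuous P) (c : ℂ) (ν q : ℤ) :
    circleMoment (fun θ => P θ * (1 + (c * circleExp ν θ).re)) q =
      circleMoment P q + c / 2 * circleMoment P (q + ν) + conj c / 2 * circleMoment P (q - ν) := by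
  have hint : ∀ p : ℤ, IntervalIntegrable (fun θ => (P θ : ℂ) * circleExp p θ) MeasureTheory.volume
      0 (2 * π) := fun p => by apply Continuous.intervalIntegrable; fun_prop
  have hexpand : ∀ θ : ℝ, ((P θ * (1 + (c * circleExp ν θ).re) : ℝ) : ℂ) * circleExp q θ =
      P θ * circleExp q θ + c / 2 * (P θ * circleExp (q + ν) θ) +
        conj c / 2 * (P θ * circleExp (q - ν) θ) := fun θ => by
    rw [ofReal_mul, ofReal_add, ofReal_one, ofReal_re_mul_circleExp, sub_eq_add_neg,
      circleExp_add, circleExp_add]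
    ring
  simp only [circleMoment, hexpand]
  rw [intervalIntegral.integral_add ((hint q).add ((hint _).const_mul _)) ((hint _).const_mul _),
    intervalIntegral.integral_add (hint q) ((hint _).const_mul _),
    intervalIntegral.integral_const_mul, intervalIntegral.integral_const_mul]

noncomputable def rieszProduct (ν : ℕ → ℕ) (c : ℕ → ℂ) (F : Finset ℕ) (θ : ℝ) : ℝ :=
  ∏ k ∈ F, (1 + (c k * circleExp (ν k) θ).re)

@[fun_prop]
lemma continuous_rieszProduct (ν : ℕ → ℕ) (c : ℕ → ℂ) (F : Finset ℕ) :
    Continuous (rieszProduct ν c F) := by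
  unfold rieszProduct; fun_prop

-- The earlier exponents sum to less than `ν k` and than the distance from `ν k` to any other
-- `ν j`, so each frequency `ν j` arises from at most one term of the expanded Riesz product.
def IsRieszSeparated (ν : ℕ → ℕ) (F : Finset ℕ) : Prop :=
  ∀ k ∈ F, ∑ i ∈ F with i < k, (ν i : ℤ) < ν k ∧
    ∀ j ≠ k, ∑ i ∈ F with i < k, (ν i : ℤ) < |(ν j : ℤ) - ν k|

section RieszProduct

variable {ν : ℕ → ℕ} {c : ℕ → ℂ}

lemma rieszProduct_empty : rieszProduct ν c ∅ = 1 := by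
  ext θ
  simp [rieszProduct]

lemma rieszProduct_insert {K : ℕ} {s : Finset ℕ} (hK : K ∉ s) :
    rieszProduct ν c (insert K s) =
      fun θ => rieszProduct ν c s θ * (1 + (c K * circleExp (ν K) θ).re) := by
  ext θ
  rw [rieszProduct, prod_insert hK, mul_comm, rieszProduct]

lemma rieszProduct_nonneg (hc : ∀ k, ‖c k‖ ≤ 1) (F : Finset ℕ) (θ : ℝ) :
    0 ≤ rieszProduct ν c F θ := by
  refine prod_nonneg fun k _ => ?_
  have : |(c k * circleExp (ν k) θ).re| ≤ 1 := by
    refine (abs_re_le_norm _).trans ?_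
    rw [norm_mul, norm_circleExp, mul_one]
    exact hc k
  linarith [neg_abs_le (c k * circleExp (ν k) θ).re]

lemma circleMoment_rieszProduct_eq_zero (F : Finset ℕ) {q : ℤ}
    (hq : ∑ k ∈ F, (ν k : ℤ) < |q|) : circleMoment (rieszProduct ν c F) q = 0 := by
  induction F using Finset.induction_on generalizing q with
  | empty =>
    have hq0 : q ≠ 0 := by simpa using hq
    rw [rieszProduct_empty, circleMoment_one, if_neg hq0]
  | insert K s hK ih =>
    rw [sum_insert hK] at hq
    rw [rieszProduct_insert hK, circleMoment_mul_rieszFactor (continuous_rieszProduct ν c s),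
      ih (by linarith), ih, ih, mul_zero, mul_zero, add_zero, add_zero]
    · linarith [abs_sub_abs_le_abs_sub q (ν K), Nat.abs_cast (R := ℤ) (ν K)]
    · have := abs_sub_abs_le_abs_sub q (-(ν K : ℤ))
      rw [sub_neg_eq_add, abs_neg] at this
      linarith [Nat.abs_cast (R := ℤ) (ν K)]

lemma IsRieszSeparated.of_insert_max {K : ℕ} {s : Finset ℕ} (hK : ∀ x ∈ s, x < K)
    (h : IsRieszSeparated ν (insert K s)) :
    IsRieszSeparated ν s ∧ ∑ i ∈ s, (ν i : ℤ) < ν K ∧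
      ∀ j ≠ K, ∑ i ∈ s, (ν i : ℤ) < |(ν j : ℤ) - ν K| := by
  have hfilter : ∀ k, k ≤ K → (insert K s).filter (· < k) = s.filter (· < k) := fun k hk => by
    rw [filter_insert, if_neg (not_lt.mpr hk)]
  have hs : s.filter (· < K) = s := filter_true_of_mem hK
  refine ⟨fun k hk => ?_, ?_⟩
  · rw [← hfilter k (hK k hk).le]
    exact h k (mem_insert_of_mem hk)
  · rw [← hs, ← hfilter K le_rfl]
    exact h K (mem_insert_self K s)

lemma circleMoment_rieszProduct (hν : ∀ k, 0 < ν k) (c : ℕ → ℂ) {F : Finset ℕ}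
    (hF : IsRieszSeparated ν F) :
    circleMoment (rieszProduct ν c F) 0 = 2 * π ∧
      ∀ j, circleMoment (rieszProduct ν c F) (ν j) = if j ∈ F then π * conj (c j) else 0 := by
  induction F using Finset.induction_on_max with
  | empty =>
    refine ⟨by simp [rieszProduct_empty, circleMoment_one], fun j => ?_⟩
    rw [rieszProduct_empty, circleMoment_one, if_neg (by exact_mod_cast (hν j).ne'),
      if_neg (notMem_empty j)]
  | insert K s hK ih =>
    obtain ⟨hs, hKsum, hKsep⟩ := hF.of_insert_max hK
    obtain ⟨ih0, ihν⟩ := ih hs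
    have hKs : K ∉ s := fun h => (hK K h).false
    have hvanish : ∀ q : ℤ, ∑ i ∈ s, (ν i : ℤ) < |q| → circleMoment (rieszProduct ν c s) q = 0 :=
      fun q hq => circleMoment_rieszProduct_eq_zero s hq
    rw [rieszProduct_insert hKs]
    simp only [circleMoment_mul_rieszFactor (continuous_rieszProduct ν c s)]
    refine ⟨?_, fun j => ?_⟩
    · rw [ih0, zero_add, zero_sub, hvanish _ (by rwa [Nat.abs_cast]),
        hvanish _ (by rwa [abs_neg, Nat.abs_cast])]
      ring
    · have hj_add : circleMoment (rieszProduct ν c s) (ν j + ν K) = 0 :=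
        hvanish _ (by rw [abs_of_nonneg (by positivity)]; linarith [Int.natCast_nonneg (ν j)])
      rw [hj_add, mul_zero, add_zero]
      by_cases hjK : j = K
      · subst hjK
        rw [sub_self, ih0, ihν, if_neg hKs, if_pos (mem_insert_self j s)]
        ring
      · rw [hvanish _ (hKsep j hjK), ihν]
        simp [mem_insert, hjK]

end RieszProduct

lemma summable_mul_circleExp {A : ℕ → ℂ} (hA : Summable (‖A ·‖)) (ν : ℕ → ℕ) (θ : ℝ) :
    Summable fun k => A k * circleExp (ν k) θ :=
  .of_norm (by simpa only [norm_mul, norm_circleExp, mul_one] using hA)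

lemma integral_mul_tsum_circleExp {P : ℝ → ℝ} (hP : Continuous P) {A : ℕ → ℂ}
    (hA : Summable (‖A ·‖)) (ν : ℕ → ℕ) :
    ∫ θ in (0 : ℝ)..2 * π, (P θ : ℂ) * ∑' k, A k * circleExp (ν k) θ =
      ∑' k, A k * circleMoment P (ν k) := by
  refine (HasSum.tsum_eq ?_).symm
  simp only [circleMoment, ← intervalIntegral.integral_const_mul]
  refine intervalIntegral.hasSum_integral_of_dominated_convergence (fun k θ => ‖A k‖ * |P θ|)
    (fun k => by apply Continuous.aestronglyMeasurable; fun_prop)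
    (fun k => .of_forall fun θ _ => by
      rw [norm_mul, norm_mul, norm_circleExp, norm_real, Real.norm_eq_abs, mul_one])
    (.of_forall fun θ _ => hA.mul_right _)
    (by simp only [tsum_mul_right]; apply Continuous.intervalIntegrable; fun_prop)
    (.of_forall fun θ _ => ?_)
  simpa only [mul_left_comm] using (summable_mul_circleExp hA ν θ).hasSum.mul_left (P θ : ℂ)

lemma mul_conj_div_norm (z : ℂ) : z * conj (z / ‖z‖) = ‖z‖ := by
  rcases eq_or_ne z 0 with rfl | hz
  · simp
  · rw [map_div₀, conj_ofReal, mul_div_assoc', mul_conj', sq, mul_div_assoc,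
      div_self (ofReal_ne_zero.mpr (norm_ne_zero_iff.mpr hz)), mul_one]

lemma sum_norm_le_of_re_tsum_le {ν : ℕ → ℕ} (hν : ∀ k, 0 < ν k) {F : Finset ℕ}
    (hF : IsRieszSeparated ν F) {A : ℕ → ℂ} (hA : Summable (‖A ·‖)) {B : ℝ}
    (hB : ∀ θ, (∑' k, A k * circleExp (ν k) θ).re ≤ B) :
    ∑ k ∈ F, ‖A k‖ ≤ 2 * B := by
  set c : ℕ → ℂ := fun k => A k / ‖A k‖
  have hc : ∀ k, ‖c k‖ ≤ 1 := fun k => by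
    simpa only [c, norm_div, norm_real, norm_norm] using div_self_le_one ‖A k‖
  set P := rieszProduct ν c F
  have hPcont : Continuous P := continuous_rieszProduct ν c F
  set g : ℝ → ℂ := fun θ => ∑' k, A k * circleExp (ν k) θ
  have hgcont : Continuous g := continuous_tsum (fun k => by fun_prop) hA
    (fun k θ => by rw [norm_mul, norm_circleExp, mul_one])
  obtain ⟨hmass, hfreq⟩ := circleMoment_rieszProduct hν c hF
  have hmoment : ∫ θ in (0 : ℝ)..2 * π, (P θ : ℂ) * g θ = ((π * ∑ k ∈ F, ‖A k‖ : ℝ) : ℂ) := by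
    rw [integral_mul_tsum_circleExp hPcont hA, tsum_eq_sum (s := F) fun k hk => by
      rw [hfreq, if_neg hk, mul_zero]]
    push_cast
    rw [mul_sum]
    refine sum_congr rfl fun k hk => ?_
    rw [hfreq, if_pos hk, mul_left_comm, mul_conj_div_norm]
  have hre : ∫ θ in (0 : ℝ)..2 * π, P θ * (g θ).re = π * ∑ k ∈ F, ‖A k‖ := by
    have := congrArg re hmoment
    rw [ofReal_re, ← RCLike.re_to_complex, ← intervalIntegral.intervalIntegral_re (by
      apply Continuous.intervalIntegrable; fun_prop)] at this
    simpa only [RCLike.re_to_complex, re_ofReal_mul] using this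
  have hPint : ∫ θ in (0 : ℝ)..2 * π, P θ = 2 * π := by
    have : circleMoment P 0 = ((∫ θ in (0 : ℝ)..2 * π, P θ : ℝ) : ℂ) := by
      simp [circleMoment, circleExp, intervalIntegral.integral_ofReal]
    exact_mod_cast this.symm.trans hmass
  have hbound : ∫ θ in (0 : ℝ)..2 * π, P θ * (g θ).re ≤ ∫ θ in (0 : ℝ)..2 * π, P θ * B :=
    intervalIntegral.integral_mono_on (by positivity)
      (by apply Continuous.intervalIntegrable; fun_prop)
      (by apply Continuous.intervalIntegrable; fun_prop)
      fun θ _ => mul_le_mul_of_nonneg_left (hB θ) (rieszProduct_nonneg hc F θ)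
  rw [hre, intervalIntegral.integral_mul_const, hPint] at hbound
  nlinarith [pi_pos]

lemma sub_one_mul_sum_le_of_separated {w : ℕ → ℝ} (hw : ∀ k, 0 ≤ w k) {r B : ℝ} (hB : 0 ≤ B)
    {s : Finset ℕ} (hsep : ∀ j ∈ s, ∀ k ∈ s, j < k → r * w j ≤ w k)
    (hs : ∀ j ∈ s, r * w j ≤ B) : (r - 1) * ∑ j ∈ s, w j ≤ B := by
  induction s using Finset.induction_on_max generalizing B with
  | empty => simpa using hB
  | insert K s hK ih =>
    have hKs : K ∉ s := fun h => (hK K h).false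
    have ih' : (r - 1) * ∑ j ∈ s, w j ≤ w K :=
      ih (hw K) (fun j hj k hk => hsep j (mem_insert_of_mem hj) k (mem_insert_of_mem hk))
        fun j hj => hsep j (mem_insert_of_mem hj) K (mem_insert_self K s) (hK j hj)
    rw [sum_insert hKs]
    linarith [hs K (mem_insert_self K s)]

section Hadamard

variable {lam : ℝ} {n : ℕ → ℕ}

lemma strictMono_of_hadamard (hlam : 1 < lam) (hn : ∀ k, 0 < n k)
    (hgap : ∀ k, lam * n k ≤ n (k + 1)) : StrictMono n :=
  strictMono_nat_of_lt_succ fun k => by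
    have : (0 : ℝ) < n k := by exact_mod_cast hn k
    exact_mod_cast (lt_mul_of_one_lt_left this hlam).trans_le (hgap k)

lemma pow_sub_mul_le_of_hadamard (hlam : 1 ≤ lam) (hgap : ∀ k, lam * n k ≤ n (k + 1))
    {j k : ℕ} (hjk : j ≤ k) : lam ^ (k - j) * n j ≤ n k := by
  obtain ⟨t, rfl⟩ := Nat.exists_eq_add_of_le hjk
  rw [Nat.add_sub_cancel_left]
  induction t with
  | zero => simp
  | succ t ih =>
    calc lam ^ (t + 1) * n j = lam * (lam ^ t * n j) := by ring
      _ ≤ lam * n (j + t) := mul_le_mul_of_nonneg_left (ih (by omega)) (by linarith)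
      _ ≤ n (j + (t + 1)) := hgap (j + t)

lemma mul_le_of_hadamard (hlam : 1 ≤ lam) (hgap : ∀ k, lam * n k ≤ n (k + 1))
    {j k : ℕ} (hjk : j < k) : lam * n j ≤ n k :=
  calc lam * n j ≤ lam ^ (k - j) * n j :=
        mul_le_mul_of_nonneg_right (le_self_pow₀ hlam (by omega)) (Nat.cast_nonneg _)
    _ ≤ n k := pow_sub_mul_le_of_hadamard hlam hgap hjk.le

lemma sub_one_mul_le_mul_abs_sub_of_hadamard (hlam : 1 ≤ lam)
    (hgap : ∀ k, lam * n k ≤ n (k + 1)) {j k : ℕ} (hjk : j ≠ k) :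
    (lam - 1) * n k ≤ lam * |(n j : ℝ) - n k| := by
  rcases hjk.lt_or_gt with hjk | hkj
  · have := mul_le_of_hadamard hlam hgap hjk
    rw [abs_sub_comm, abs_of_nonneg (by nlinarith [(Nat.cast_nonneg (n j) : (0 : ℝ) ≤ n j)])]
    linarith
  · have := mul_le_of_hadamard hlam hgap hkj
    have hd : 0 ≤ (n j : ℝ) - n k := by nlinarith [(Nat.cast_nonneg (n k) : (0 : ℝ) ≤ n k)]
    rw [abs_of_nonneg hd]
    nlinarith [mul_le_mul_of_nonneg_right hlam hd]

lemma isRieszSeparated_of_separated (hlam : 1 < lam) (hn : ∀ k, 0 < n k)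
    (hgap : ∀ k, lam * n k ≤ n (k + 1)) {r : ℝ} (hr : 2 * lam ≤ (r - 1) * (lam - 1))
    {F : Finset ℕ} (hF : ∀ j ∈ F, ∀ k ∈ F, j < k → r * n j ≤ n k) : IsRieszSeparated n F := by
  intro k hk
  set T := ∑ i ∈ F with i < k, (n i : ℝ)
  have hT : (r - 1) * T ≤ n k :=
    sub_one_mul_sum_le_of_separated (fun _ => Nat.cast_nonneg _) (Nat.cast_nonneg _)
      (fun i hi j hj => hF i (mem_filter.mp hi).1 j (mem_filter.mp hj).1)
      fun i hi => hF i (mem_filter.mp hi).1 k hk (mem_filter.mp hi).2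
  have hT0 : 0 ≤ T := sum_nonneg fun _ _ => Nat.cast_nonneg _
  have hnk : (0 : ℝ) < n k := by exact_mod_cast hn k
  have h2T : 2 * lam * T ≤ (lam - 1) * n k := by nlinarith
  refine ⟨?_, fun j hjk => ?_⟩ <;> rw [← Int.cast_lt (R := ℝ)] <;> push_cast
  · nlinarith
  · nlinarith [sub_one_mul_le_mul_abs_sub_of_hadamard hlam.le hgap hjk]

lemma exists_isRieszSeparated_of_mod_eq (hlam : 1 < lam) (hn : ∀ k, 0 < n k)
    (hgap : ∀ k, lam * n k ≤ n (k + 1)) :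
    ∃ m > 0, ∀ (r : ℕ) (F : Finset ℕ), (∀ k ∈ F, k % m = r) → IsRieszSeparated n F := by
  obtain ⟨m, hm⟩ := (tendsto_pow_atTop_atTop_of_one_lt hlam).eventually_ge_atTop
    (1 + 2 * lam / (lam - 1)) |>.exists
  have hfrac : 0 < 2 * lam / (lam - 1) := div_pos (by linarith) (by linarith)
  have hm0 : 0 < m := Nat.pos_of_ne_zero fun h => by simp [h] at hm; linarith
  refine ⟨m, hm0, fun r F hF => isRieszSeparated_of_separated hlam hn hgap (r := lam ^ m) ?_ ?_⟩
  · rw [← div_le_iff₀ (by linarith)]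
    linarith
  · intro j hj k hk hjk
    have hdvd : m ∣ k - j := (Nat.modEq_iff_dvd' hjk.le).mp ((hF j hj).trans (hF k hk).symm)
    calc lam ^ m * n j ≤ lam ^ (k - j) * n j :=
          mul_le_mul_of_nonneg_right (pow_le_pow_right₀ hlam.le (Nat.le_of_dvd (by omega) hdvd))
            (Nat.cast_nonneg _)
      _ ≤ n k := pow_sub_mul_le_of_hadamard hlam.le hgap hjk.le

end Hadamard

lemma tsum_norm_le_of_re_tsum_le {ν : ℕ → ℕ} (hν : ∀ k, 0 < ν k) {m : ℕ} (hm : 0 < m)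
    (hsep : ∀ (r : ℕ) (F : Finset ℕ), (∀ k ∈ F, k % m = r) → IsRieszSeparated ν F)
    {A : ℕ → ℂ} (hA : Summable (‖A ·‖)) {B : ℝ}
    (hB : ∀ θ, (∑' k, A k * circleExp (ν k) θ).re ≤ B) :
    ∑' k, ‖A k‖ ≤ m * (2 * B) := by
  refine hA.tsum_le_of_sum_le fun G => ?_
  rw [← sum_fiberwise_of_maps_to (g := (· % m)) (t := range m)
    fun k _ => mem_range.mpr (Nat.mod_lt k hm)]
  calc ∑ r ∈ range m, ∑ k ∈ G with k % m = r, ‖A k‖ ≤ ∑ _r ∈ range m, 2 * B :=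
        sum_le_sum fun r _ =>
          sum_norm_le_of_re_tsum_le hν (hsep r _ fun k hk => (mem_filter.mp hk).2) hA hB
    _ = m * (2 * B) := by rw [sum_const, card_range, nsmul_eq_mul]

lemma summable_norm_mul_pow_of_summable_s4 {a : ℕ → ℂ} {n : ℕ → ℕ} (hn : ∀ k, k ≤ n k)
    {w z : ℂ} (hw : Summable fun k => a k * w ^ n k) (hzw : ‖z‖ < ‖w‖) :
    Summable fun k => ‖a k * z ^ n k‖ := by
  have hw0 : 0 < ‖w‖ := (norm_nonneg z).trans_lt hzw
  set q := ‖z‖ / ‖w‖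
  have hq0 : 0 ≤ q := by positivity
  have hq1 : q < 1 := (div_lt_one hw0).mpr hzw
  have hzq : ‖z‖ = ‖w‖ * q := (mul_div_cancel₀ _ hw0.ne').symm
  refine .of_norm_bounded_eventually_nat (summable_geometric_of_lt_one hq0 hq1) ?_
  filter_upwards [hw.tendsto_atTop_zero.norm.eventually_le_const (by norm_num : (‖(0 : ℂ)‖) < 1)]
    with k hk
  rw [norm_norm, norm_mul, norm_pow, hzq, mul_pow, ← mul_assoc, ← norm_pow, ← norm_mul]
  calc ‖a k * w ^ n k‖ * q ^ n k ≤ 1 * q ^ n k := by gcongr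
    _ ≤ q ^ k := by rw [one_mul]; exact pow_le_pow_of_le_one hq0 hq1.le (hn k)

theorem stmt_4_general
    (v : ℝ → ℝ)
    (lam : ℝ) (hlam : 1 < lam)
    (n : ℕ → ℕ) (hn : ∀ k, 0 < n k)
    (hgap : ∀ k, lam * (n k : ℝ) ≤ (n (k+1) : ℝ))
    (a : ℕ → ℂ)
    (f : ℂ → ℂ)
    (hconv : ∀ z ∈ Metric.ball (0:ℂ) 1, Summable (fun k : ℕ => a k * z ^ (n k)))
    (hf : ∀ z ∈ Metric.ball (0:ℂ) 1, f z = ∑' k : ℕ, a k * z ^ (n k))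
    (K : ℝ) (hK : 0 < K)
    (hbdd : ∀ z ∈ Metric.ball (0:ℂ) 1, (f z).re ≤ K * v (‖z‖)) :
    ∃ C > 0, ∀ z ∈ Metric.ball (0:ℂ) 1,
      |(f z).re| ≤ C * v (‖z‖) ∧ |(f z).im| ≤ C * v (‖z‖) := by
  obtain ⟨m, hm, hsep⟩ := exists_isRieszSeparated_of_mod_eq hlam hn hgap
  refine ⟨m * (2 * K), by positivity, fun z hz => ?_⟩
  have hz1 : ‖z‖ < 1 := mem_ball_zero_iff.mp hz
  have hnorm_rot : ∀ θ : ℝ, ‖z * cexp (θ * I)‖ = ‖z‖ := fun θ => by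
    rw [norm_mul, norm_exp_ofReal_mul_I, mul_one]
  have hw : ‖(((1 + ‖z‖) / 2 : ℝ) : ℂ)‖ = (1 + ‖z‖) / 2 := by
    rw [norm_real, Real.norm_of_nonneg (by positivity)]
  have hA : Summable fun k => ‖a k * z ^ n k‖ :=
    summable_norm_mul_pow_of_summable_s4 (strictMono_of_hadamard hlam hn hgap).id_le
      (hconv _ (by rw [mem_ball_zero_iff, hw]; linarith)) (by rw [hw]; linarith)
  have hB : ∀ θ : ℝ, (∑' k, a k * z ^ n k * circleExp (n k) θ).re ≤ K * v ‖z‖ := fun θ => by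
    have hmem : z * cexp (θ * I) ∈ Metric.ball (0 : ℂ) 1 := by
      rwa [mem_ball_zero_iff, hnorm_rot]
    simpa only [hf _ hmem, hnorm_rot, pow_mul_circleExp, mul_assoc] using hbdd _ hmem
  have hnorm : ‖f z‖ ≤ m * (2 * K) * v ‖z‖ :=
    calc ‖f z‖ ≤ ∑' k, ‖a k * z ^ n k‖ := hf z hz ▸ norm_tsum_le_tsum_norm hA
      _ ≤ m * (2 * (K * v ‖z‖)) := tsum_norm_le_of_re_tsum_le hn hm hsep hA hB
      _ = m * (2 * K) * v ‖z‖ := by ring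
  exact ⟨(abs_re_le_norm _).trans hnorm, (abs_im_le_norm _).trans hnorm⟩

theorem stmt_4
    (v : ℝ → ℝ)
    (hv_pos : ∀ r ∈ Set.Ico (0:ℝ) 1, 0 < v r)
    (hv_mono : StrictMonoOn v (Set.Ico (0:ℝ) 1))
    (hv_cont : ContinuousOn v (Set.Ico (0:ℝ) 1))
    (hv_zero : v 0 = 1)
    (hv_top : Filter.Tendsto v (nhdsWithin 1 (Set.Iio (1:ℝ))) Filter.atTop)
    (D : ℝ) (hD : 1 < D)
    (hdbl : ∀ d ∈ Set.Ioc (0:ℝ) (1/2:ℝ), v (1 - d) ≤ D * v (1 - 2*d))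
    (lam : ℝ) (hlam : 1 < lam)
    (n : ℕ → ℕ) (hn : ∀ k, 0 < n k)
    (hgap : ∀ k, lam * (n k : ℝ) ≤ (n (k+1) : ℝ))
    (a : ℕ → ℂ)
    (f : ℂ → ℂ)
    (hf_diff : DifferentiableOn ℂ f (Metric.ball (0:ℂ) 1))
    (hconv : ∀ z ∈ Metric.ball (0:ℂ) 1, Summable (fun k : ℕ => a k * z ^ (n k)))
    (hf : ∀ z ∈ Metric.ball (0:ℂ) 1, f z = ∑' k : ℕ, a k * z ^ (n k))
    (K : ℝ) (hK : 0 < K)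
    (hbdd : ∀ z ∈ Metric.ball (0:ℂ) 1, (f z).re ≤ K * v (‖z‖)) :
    ∃ C > 0, ∀ z ∈ Metric.ball (0:ℂ) 1,
      |(f z).re| ≤ C * v (‖z‖) ∧ |(f z).im| ≤ C * v (‖z‖) :=
  stmt_4_general v lam hlam n hn hgap a f hconv hf K hK hbdd
end

section
/- Let v be a weight function satisfying the doubling condition, and let g(x)=v(1-1/x). Suppose that for every C > 0 there exists a positive integer n = n(C) with ∑_{k=1}^{n} g(2^k) > C g(2^n). Then the function u(z) = Re ∑_{k=1}^∞ g(2^k) z^{2^k} (wherever the series converges on the disk) does not satisfy a one-sided bound: for every K > 0 there exists z in the open unit disk with u(z) > K v(|z|). -/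
/-
Evaluate at the real point r = 1 - 2^{-(n+1)}, where v(r) = g(2^{n+1}) ≤ D g(2^n).
By Bernoulli's inequality r^{2^k} ≥ r^{2^n} ≥ 1/2 for k ≤ n, so the series at r is at least
half the partial sum ∑_{k ≤ n} g(2^k), which by hypothesis exceeds 2DK g(2^n) for a suitable n.
The doubling condition makes g(2^k) grow at most geometrically, which is what makes the
lacunary series converge on the disk.
-/

open Finset Filter

lemma half_le_one_sub_inv_two_pow_succ_pow (n : ℕ) :
    (1 / 2 : ℝ) ≤ (1 - 1 / 2 ^ (n + 1)) ^ 2 ^ n := by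
  have hx : (-2 : ℝ) ≤ -(1 / 2 ^ (n + 1)) := by
    have : (1 : ℝ) / 2 ^ (n + 1) ≤ 1 := div_le_one_of_le₀ (one_le_pow₀ one_le_two) (by positivity)
    linarith
  have hbern := one_add_mul_le_pow hx (2 ^ n)
  have hlhs : (1 : ℝ) + ((2 ^ n : ℕ) : ℝ) * -(1 / 2 ^ (n + 1)) = 1 / 2 := by
    push_cast; rw [pow_succ]; field_simp; ring
  rwa [hlhs, ← sub_eq_add_neg] at hbern

lemma sum_Icc_one_eq_sum_range_succ {M : Type*} [AddCommMonoid M] (f : ℕ → M) (n : ℕ) :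
    ∑ k ∈ Icc 1 n, f k = ∑ k ∈ range n, f (k + 1) := by
  rw [← Ico_add_one_right_eq_Icc, sum_Ico_eq_sum_range]
  exact sum_congr rfl fun k _ => by rw [add_comm]

lemma one_sub_inv_two_pow_mem_Ico (k : ℕ) : 1 - 1 / (2 : ℝ) ^ k ∈ Set.Ico 0 1 := by
  have hpos : (0 : ℝ) < 1 / 2 ^ k := by positivity
  have hle : (1 : ℝ) / 2 ^ k ≤ 1 := div_le_one_of_le₀ (one_le_pow₀ one_le_two) (by positivity)
  constructor <;> linarith

section LacunarySeries

variable {c : ℕ → ℝ} {D r : ℝ}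

lemma summable_mul_pow_two_pow (hc : ∀ k, 0 ≤ c k) (hcD : ∀ k, c (k + 1) ≤ D * c k)
    (hr0 : 0 ≤ r) (hr1 : r < 1) : Summable fun k => c k * r ^ 2 ^ k := by
  have hterm_nonneg : ∀ k, 0 ≤ c k * r ^ 2 ^ k := fun k => mul_nonneg (hc k) (by positivity)
  have hsmall : ∀ᶠ k : ℕ in atTop, D * r ^ 2 ^ k ≤ 1 / 2 := by
    have hpow : Tendsto (fun k : ℕ => r ^ 2 ^ k) atTop (nhds 0) :=
      (tendsto_pow_atTop_nhds_zero_of_lt_one hr0 hr1).comp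
        (tendsto_pow_atTop_atTop_of_one_lt one_lt_two)
    have hlim : Tendsto (fun k : ℕ => D * r ^ 2 ^ k) atTop (nhds 0) := by
      simpa using hpow.const_mul D
    exact hlim.eventually_le_const one_half_pos
  refine summable_of_ratio_norm_eventually_le one_half_lt_one ?_
  filter_upwards [hsmall] with k hk
  rw [Real.norm_of_nonneg (hterm_nonneg _), Real.norm_of_nonneg (hterm_nonneg _)]
  calc c (k + 1) * r ^ 2 ^ (k + 1)
      ≤ D * c k * r ^ 2 ^ (k + 1) := by gcongr; exact hcD k
    _ = (D * r ^ 2 ^ k) * (c k * r ^ 2 ^ k) := by rw [pow_succ, pow_mul, sq]; ring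
    _ ≤ 1 / 2 * (c k * r ^ 2 ^ k) := by gcongr; exact hterm_nonneg k

lemma half_sum_Icc_le_tsum_mul_pow_two_pow (hc : ∀ k, 0 ≤ c k)
    (hcD : ∀ k, c (k + 1) ≤ D * c k) (n : ℕ) :
    1 / 2 * ∑ k ∈ Icc 1 n, c k ≤
      ∑' k, c (k + 1) * (1 - 1 / 2 ^ (n + 1)) ^ 2 ^ (k + 1) := by
  set r : ℝ := 1 - 1 / 2 ^ (n + 1)
  have hr_half : 1 / 2 ≤ r ^ 2 ^ n := half_le_one_sub_inv_two_pow_succ_pow n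
  obtain ⟨hr0, hr1⟩ := one_sub_inv_two_pow_mem_Ico (n + 1)
  have hsummable : Summable fun k => c (k + 1) * r ^ 2 ^ (k + 1) :=
    (summable_nat_add_iff 1).2 (summable_mul_pow_two_pow hc hcD hr0 hr1)
  calc 1 / 2 * ∑ k ∈ Icc 1 n, c k
      = ∑ k ∈ range n, 1 / 2 * c (k + 1) := by
        rw [sum_Icc_one_eq_sum_range_succ, mul_sum]
    _ ≤ ∑ k ∈ range n, c (k + 1) * r ^ 2 ^ (k + 1) := by
        refine sum_le_sum fun k hk => ?_
        have hk : k + 1 ≤ n := mem_range.1 hk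
        have : r ^ 2 ^ n ≤ r ^ 2 ^ (k + 1) :=
          pow_le_pow_of_le_one hr0 hr1.le (Nat.pow_le_pow_right two_pos hk)
        nlinarith [hc (k + 1)]
    _ ≤ ∑' k, c (k + 1) * r ^ 2 ^ (k + 1) :=
        hsummable.sum_le_tsum _ fun k _ => mul_nonneg (hc _) (by positivity)

end LacunarySeries

lemma le_mul_of_doubling_two_pow {v : ℝ → ℝ} {D : ℝ}
    (hdbl : ∀ d ∈ Set.Ioc (0:ℝ) (1/2:ℝ), v (1 - d) ≤ D * v (1 - 2*d)) (k : ℕ) :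
    v (1 - 1 / 2 ^ (k + 1)) ≤ D * v (1 - 1 / 2 ^ k) := by
  have hd : (1 : ℝ) / 2 ^ (k + 1) ∈ Set.Ioc 0 (1 / 2) :=
    ⟨by positivity, one_div_le_one_div_of_le two_pos (le_self_pow₀ one_le_two k.succ_ne_zero)⟩
  have htwice : 2 * ((1 : ℝ) / 2 ^ (k + 1)) = 1 / 2 ^ k := by rw [pow_succ]; field_simp
  simpa only [htwice] using hdbl _ hd

theorem stmt_9_general
    (v : ℝ → ℝ)
    (hv_pos : ∀ r ∈ Set.Ico (0:ℝ) 1, 0 < v r)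
    (D : ℝ) (hD : 1 < D)
    (hdbl : ∀ d ∈ Set.Ioc (0:ℝ) (1/2:ℝ), v (1 - d) ≤ D * v (1 - 2*d))
    (g : ℝ → ℝ) (hg : ∀ x, g x = v (1 - 1/x))
    (hbig : ∀ C : ℝ, 0 < C → ∃ m : ℕ, 1 ≤ m ∧
      C * g ((2:ℝ) ^ m) < ∑ k ∈ Finset.Icc 1 m, g ((2:ℝ) ^ k)) :
    ∀ K : ℝ, 0 < K → ∃ z ∈ Metric.ball (0:ℂ) 1,
      Summable (fun k : ℕ => (g ((2:ℝ) ^ (k+1)) : ℂ) * z ^ (2 ^ (k+1))) ∧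
      K * v ‖z‖ <
        (∑' k : ℕ, (g ((2:ℝ) ^ (k+1)) : ℂ) * z ^ (2 ^ (k+1))).re := by
  intro K hK
  set c : ℕ → ℝ := fun k => g (2 ^ k)
  have hc : ∀ k, 0 ≤ c k := fun k => (hg _ ▸ hv_pos _ (one_sub_inv_two_pow_mem_Ico k)).le
  have hcD : ∀ k, c (k + 1) ≤ D * c k := fun k => by
    simpa only [c, hg] using le_mul_of_doubling_two_pow hdbl k
  obtain ⟨n, -, hn⟩ := hbig (2 * D * K) (by positivity)
  set r : ℝ := 1 - 1 / 2 ^ (n + 1)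
  obtain ⟨hr0, hr1⟩ := one_sub_inv_two_pow_mem_Ico (n + 1)
  have hseries : (fun k : ℕ => (c (k + 1) : ℂ) * (r : ℂ) ^ 2 ^ (k + 1)) =
      fun k => ((c (k + 1) * r ^ 2 ^ (k + 1) : ℝ) : ℂ) := by
    push_cast; rfl
  refine ⟨r, by rwa [mem_ball_zero_iff, Complex.norm_of_nonneg hr0], ?_, ?_⟩
  · rw [hseries, Complex.summable_ofReal, summable_nat_add_iff 1 (f := fun k => c k * r ^ 2 ^ k)]
    exact summable_mul_pow_two_pow hc hcD hr0 hr1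
  · rw [hseries, ← Complex.ofReal_tsum, Complex.ofReal_re, Complex.norm_of_nonneg hr0, ← hg]
    calc K * c (n + 1) ≤ K * (D * c n) := by gcongr; exact hcD n
      _ < 1 / 2 * ∑ k ∈ Icc 1 n, c k := by linarith
      _ ≤ _ := half_sum_Icc_le_tsum_mul_pow_two_pow hc hcD n

theorem stmt_9
    (v : ℝ → ℝ)
    (hv_pos : ∀ r ∈ Set.Ico (0:ℝ) 1, 0 < v r)
    (hv_mono : StrictMonoOn v (Set.Ico (0:ℝ) 1))
    (hv_cont : ContinuousOn v (Set.Ico (0:ℝ) 1))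
    (hv_zero : v 0 = 1)
    (hv_top : Filter.Tendsto v (nhdsWithin 1 (Set.Iio (1:ℝ))) Filter.atTop)
    (D : ℝ) (hD : 1 < D)
    (hdbl : ∀ d ∈ Set.Ioc (0:ℝ) (1/2:ℝ), v (1 - d) ≤ D * v (1 - 2*d))
    (g : ℝ → ℝ) (hg : ∀ x, g x = v (1 - 1/x))
    (hbig : ∀ C : ℝ, 0 < C → ∃ m : ℕ, 1 ≤ m ∧
      C * g ((2:ℝ) ^ m) < ∑ k ∈ Finset.Icc 1 m, g ((2:ℝ) ^ k)) :
    ∀ K : ℝ, 0 < K → ∃ z ∈ Metric.ball (0:ℂ) 1,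
      Summable (fun k : ℕ => (g ((2:ℝ) ^ (k+1)) : ℂ) * z ^ (2 ^ (k+1))) ∧
      K * v ‖z‖ <
        (∑' k : ℕ, (g ((2:ℝ) ^ (k+1)) : ℂ) * z ^ (2 ^ (k+1))).re :=
  stmt_9_general v hv_pos D hD hdbl g hg hbig
end

section
/- Let v be a weight function satisfying the doubling condition with constant D. Then there exist a constant C > 0 and an integer n_0 ≥ 1, both depending only on D, such that for every integer n ≥ n_0 and every s ∈ (0, 1 - 1/n], one has ∫_0^s r^{n-1}/v(r) dr ≤ C s^n / (n v(s)). -/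
/-!
Put δ = 1 - s ≥ 1/n and s' = 1 - 2^m δ. Iterating the doubling condition m times gives
v(s) ≤ D^m v(s'), while nδ ≥ 1 gives s'^n ≤ e^{1-2^m} s^n. Splitting ∫_0^s at s' and bounding
1/v by 1/v(s') on [s', s], the bound with C = 2 D^{m+1} passes from s' to s as soon as
D^m e^{1-2^m} ≤ 1/2. Where δ ≥ 2^{-(m+1)} the bound holds directly, since there
v(s) ≤ D^{m+1} v(0) and ∫_0^s r^{n-1}/v(r) dr ≤ s^n/(n v(0)); every other s reaches this region
after finitely many steps s ↦ s'.
-/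

open Real Set

theorem one_sub_mul_pow_le_exp_mul_pow {a δ : ℝ} {n : ℕ} (ha : 1 ≤ a) (hδ : 0 ≤ δ)
    (haδ : a * δ ≤ 1) (hnδ : 1 ≤ n * δ) :
    (1 - a * δ) ^ n ≤ exp (1 - a) * (1 - δ) ^ n := by
  have hfactor : 1 - a * δ ≤ (1 - δ) * (1 - (a - 1) * δ) := by
    nlinarith [mul_nonneg (sub_nonneg.2 ha) (mul_self_nonneg δ)]
  have hδ1 : δ ≤ 1 := by nlinarith
  have hexp : (1 - (a - 1) * δ) ^ n ≤ exp (1 - a) :=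
    calc (1 - (a - 1) * δ) ^ n ≤ exp (-((a - 1) * δ)) ^ n := by
          gcongr
          · nlinarith
          · linarith [add_one_le_exp (-((a - 1) * δ))]
      _ = exp (n * -((a - 1) * δ)) := (exp_nat_mul _ n).symm
      _ ≤ exp (1 - a) := by gcongr; nlinarith
  calc (1 - a * δ) ^ n ≤ ((1 - δ) * (1 - (a - 1) * δ)) ^ n := by gcongr
    _ = (1 - (a - 1) * δ) ^ n * (1 - δ) ^ n := by rw [mul_pow, mul_comm]
    _ ≤ exp (1 - a) * (1 - δ) ^ n := by gcongr

theorem exists_pow_mul_exp_one_sub_two_pow_le_half {D : ℝ} (hD : 0 ≤ D) :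
    ∃ m : ℕ, 1 ≤ m ∧ D ^ m * exp (1 - 2 ^ m) ≤ 1 / 2 := by
  set j := ⌈2 * D⌉₊ + 1
  have hj : 2 * D + 1 ≤ j := by push_cast [j]; linarith [Nat.le_ceil (2 * D)]
  have hj2 : ((j : ℝ) + 1) ^ 2 ≤ 2 ^ (2 * j) := by
    rw [pow_mul']
    gcongr
    exact_mod_cast Nat.lt_two_pow_self
  have hgrowth : ((2 * j : ℕ) : ℝ) * D + 2 ≤ 2 ^ (2 * j) := by push_cast; nlinarith
  refine ⟨2 * j, by omega, ?_⟩
  calc D ^ (2 * j) * exp (1 - 2 ^ (2 * j)) ≤ exp D ^ (2 * j) * exp (1 - 2 ^ (2 * j)) := by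
        gcongr
        linarith [add_one_le_exp D]
    _ = exp (((2 * j : ℕ) : ℝ) * D + 1 - 2 ^ (2 * j)) := by
        rw [← exp_nat_mul, ← exp_add]; ring_nf
    _ ≤ exp (-1) := by gcongr; linarith
    _ ≤ 1 / 2 := by
        rw [exp_neg, one_div]
        gcongr
        linarith [exp_one_gt_d9]

section Weight

variable {v : ℝ → ℝ} {D : ℝ}

theorem le_pow_mul_of_doubling (hD : 0 ≤ D)
    (hdbl : ∀ d ∈ Ioc (0 : ℝ) (1 / 2), v (1 - d) ≤ D * v (1 - 2 * d)) (j : ℕ) {d : ℝ}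
    (hd : 0 < d) (hjd : 2 ^ j * d ≤ 1) : v (1 - d) ≤ D ^ j * v (1 - 2 ^ j * d) := by
  induction j generalizing d with
  | zero => simp
  | succ j ih =>
    have hjd' : 2 ^ j * (2 * d) ≤ 1 := by rw [pow_succ] at hjd; linarith
    have h2d : 2 * d ≤ 1 :=
      (le_mul_of_one_le_left (by positivity) (one_le_pow₀ one_le_two)).trans hjd'
    calc v (1 - d) ≤ D * v (1 - 2 * d) := hdbl d ⟨hd, by linarith⟩
      _ ≤ D * (D ^ j * v (1 - 2 ^ j * (2 * d))) := by gcongr; exact ih (by positivity) hjd'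
      _ = D ^ (j + 1) * v (1 - 2 ^ (j + 1) * d) := by ring_nf

theorem intervalIntegrable_pow_div (hv_pos : ∀ r ∈ Ico (0 : ℝ) 1, 0 < v r)
    (hv_mono : MonotoneOn v (Ico 0 1)) (k : ℕ) {a b : ℝ} (ha : 0 ≤ a) (hab : a ≤ b)
    (hb : b < 1) :
    IntervalIntegrable (fun r => r ^ k / v r) MeasureTheory.volume a b := by
  have hsub : uIcc a b ⊆ Ico 0 1 := by
    rw [uIcc_of_le hab]
    exact fun x hx => ⟨ha.trans hx.1, hx.2.trans_lt hb⟩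
  have hinv : AntitoneOn (fun r => (v r)⁻¹) (uIcc a b) := fun x hx y hy hxy =>
    inv_anti₀ (hv_pos x (hsub hx)) (hv_mono (hsub hx) (hsub hy) hxy)
  simpa only [div_eq_mul_inv] using
    hinv.intervalIntegrable.continuousOn_mul (continuous_pow k).continuousOn

theorem integral_pow_sub_one_div_le (hv_pos : ∀ r ∈ Ico (0 : ℝ) 1, 0 < v r)
    (hv_mono : MonotoneOn v (Ico 0 1)) {n : ℕ} (hn : n ≠ 0) {a b : ℝ} (ha : 0 ≤ a) (hab : a ≤ b)
    (hb : b < 1) : ∫ r in a..b, r ^ (n - 1) / v r ≤ (b ^ n - a ^ n) / (n * v a) := by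
  have haI : a ∈ Ico (0 : ℝ) 1 := ⟨ha, hab.trans_lt hb⟩
  calc ∫ r in a..b, r ^ (n - 1) / v r ≤ ∫ r in a..b, r ^ (n - 1) / v a := by
        refine intervalIntegral.integral_mono_on hab
          (intervalIntegrable_pow_div hv_pos hv_mono _ ha hab hb)
          (((continuous_pow _).div_const _).intervalIntegrable _ _) fun x hx => ?_
        have hxI : x ∈ Ico (0 : ℝ) 1 := ⟨ha.trans hx.1, hx.2.trans_lt hb⟩
        exact div_le_div_of_nonneg_left (pow_nonneg hxI.1 _) (hv_pos a haI)
          (hv_mono haI hxI hx.1)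
    _ = (b ^ n - a ^ n) / (n * v a) := by
        rw [intervalIntegral.integral_div, integral_pow,
          Nat.sub_add_cancel (Nat.pos_of_ne_zero hn), div_div, Nat.cast_sub (Nat.pos_of_ne_zero hn)]
        push_cast
        ring_nf

theorem integral_pow_sub_one_div_le_of_one_le_two_pow_mul
    (hv_pos : ∀ r ∈ Ico (0 : ℝ) 1, 0 < v r) (hv_mono : MonotoneOn v (Ico 0 1)) (hD : 0 ≤ D)
    (hdbl : ∀ d ∈ Ioc (0 : ℝ) (1 / 2), v (1 - d) ≤ D * v (1 - 2 * d)) {m n : ℕ} {C : ℝ}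
    (hC : D ^ m ≤ C) (hn : n ≠ 0) {s : ℝ} (hs : 0 ≤ s) (hreg : 1 ≤ 2 ^ m * (1 - s)) :
    ∫ r in (0 : ℝ)..s, r ^ (n - 1) / v r ≤ C * s ^ n / (n * v s) := by
  have h2m : (0 : ℝ) < 2 ^ m := by positivity
  have hs1 : s < 1 := by nlinarith
  have hv0 := hv_pos 0 ⟨le_rfl, one_pos⟩
  have hvs := hv_pos s ⟨hs, hs1⟩
  have hvsC : v s ≤ C * v 0 := by
    have hd : (2 : ℝ) ^ m * (2 ^ m)⁻¹ = 1 := mul_inv_cancel₀ h2m.ne'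
    have hchain := le_pow_mul_of_doubling hD hdbl m (d := (2 ^ m)⁻¹) (by positivity) hd.le
    rw [hd, sub_self] at hchain
    have hsd : s ≤ 1 - (2 ^ m)⁻¹ := by
      rw [← div_le_iff₀' h2m, one_div] at hreg; linarith
    calc v s ≤ v (1 - (2 ^ m)⁻¹) :=
          hv_mono ⟨hs, hs1⟩ ⟨hs.trans hsd, by linarith [inv_pos.2 h2m]⟩ hsd
      _ ≤ D ^ m * v 0 := hchain
      _ ≤ C * v 0 := by gcongr
  have hn0 : (0 : ℝ) < n := by positivity
  calc ∫ r in (0 : ℝ)..s, r ^ (n - 1) / v r ≤ (s ^ n - 0 ^ n) / (n * v 0) :=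
        integral_pow_sub_one_div_le hv_pos hv_mono hn le_rfl hs hs1
    _ = s ^ n / (n * v 0) := by rw [zero_pow hn, sub_zero]
    _ ≤ C * s ^ n / (n * v s) := by
        rw [div_le_div_iff₀ (by positivity) (by positivity)]
        have := mul_le_mul_of_nonneg_left hvsC (by positivity : (0 : ℝ) ≤ s ^ n * n)
        linarith

theorem integral_pow_sub_one_div_le_of_le_at_one_sub_two_pow_mul
    (hv_pos : ∀ r ∈ Ico (0 : ℝ) 1, 0 < v r) (hv_mono : MonotoneOn v (Ico 0 1)) (hD : 1 ≤ D)
    (hdbl : ∀ d ∈ Ioc (0 : ℝ) (1 / 2), v (1 - d) ≤ D * v (1 - 2 * d)) {m n : ℕ}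
    (hmD : D ^ m * exp (1 - 2 ^ m) ≤ 1 / 2) (hn : n ≠ 0) {s : ℝ} (hsn : 1 / n ≤ 1 - s)
    (hs' : 0 ≤ 1 - 2 ^ m * (1 - s))
    (hprev : ∫ r in (0 : ℝ)..1 - 2 ^ m * (1 - s), r ^ (n - 1) / v r ≤
      2 * D ^ (m + 1) * (1 - 2 ^ m * (1 - s)) ^ n / (n * v (1 - 2 ^ m * (1 - s)))) :
    ∫ r in (0 : ℝ)..s, r ^ (n - 1) / v r ≤ 2 * D ^ (m + 1) * s ^ n / (n * v s) := by
  set s' := 1 - 2 ^ m * (1 - s)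
  set C := 2 * D ^ (m + 1)
  have hn0 : (0 : ℝ) < n := by positivity
  have hδ : 0 < 1 - s := (one_div_pos.2 hn0).trans_le hsn
  have h2m : (1 : ℝ) ≤ 2 ^ m := one_le_pow₀ one_le_two
  have hs's : s' ≤ s := by nlinarith
  have hs1 : s < 1 := by linarith
  have hs0 : 0 ≤ s := hs'.trans hs's
  have hsn0 : 0 ≤ s ^ n := pow_nonneg hs0 n
  have hvs := hv_pos s ⟨hs0, hs1⟩
  have hvs' := hv_pos s' ⟨hs', hs's.trans_lt hs1⟩
  have hv_ratio : v s ≤ D ^ m * v s' := by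
    simpa only [sub_sub_cancel] using
      le_pow_mul_of_doubling (by linarith) hdbl m hδ (by linarith : (2 : ℝ) ^ m * (1 - s) ≤ 1)
  have hpow_ratio : s' ^ n ≤ exp (1 - 2 ^ m) * s ^ n := by
    have hnδ : 1 ≤ n * (1 - s) := by rwa [div_le_iff₀' hn0] at hsn
    simpa only [sub_sub_cancel] using
      one_sub_mul_pow_le_exp_mul_pow h2m hδ.le (by linarith) hnδ
  have hDm : D ^ m ≤ D ^ (m + 1) := pow_le_pow_right₀ hD (Nat.le_succ m)
  have hprev_term : C * (s' ^ n * v s) ≤ C / 2 * (s ^ n * v s') := by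
    calc C * (s' ^ n * v s) ≤ C * ((exp (1 - 2 ^ m) * s ^ n) * (D ^ m * v s')) := by gcongr
      _ = C * (D ^ m * exp (1 - 2 ^ m)) * (s ^ n * v s') := by ring
      _ ≤ C * (1 / 2) * (s ^ n * v s') := by gcongr
      _ = C / 2 * (s ^ n * v s') := by ring
  have hlast_term : s ^ n * v s ≤ C / 2 * (s ^ n * v s') := by
    calc s ^ n * v s ≤ s ^ n * (D ^ m * v s') := by gcongr
      _ ≤ s ^ n * (D ^ (m + 1) * v s') := by gcongr
      _ = C / 2 * (s ^ n * v s') := by ring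
  calc ∫ r in (0 : ℝ)..s, r ^ (n - 1) / v r
      = (∫ r in (0 : ℝ)..s', r ^ (n - 1) / v r) + ∫ r in s'..s, r ^ (n - 1) / v r :=
        (intervalIntegral.integral_add_adjacent_intervals
          (intervalIntegrable_pow_div hv_pos hv_mono _ le_rfl hs' (hs's.trans_lt hs1))
          (intervalIntegrable_pow_div hv_pos hv_mono _ hs' hs's hs1)).symm
    _ ≤ C * s' ^ n / (n * v s') + (s ^ n - s' ^ n) / (n * v s') :=
        add_le_add hprev (integral_pow_sub_one_div_le hv_pos hv_mono hn hs' hs's hs1)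
    _ ≤ C * s ^ n / (n * v s) := by
        rw [← add_div, div_le_div_iff₀ (by positivity) (by positivity)]
        have hs'n : 0 ≤ s' ^ n * v s := by positivity
        nlinarith

theorem integral_pow_sub_one_div_le_of_one_le_two_pow_mul_pow
    (hv_pos : ∀ r ∈ Ico (0 : ℝ) 1, 0 < v r) (hv_mono : MonotoneOn v (Ico 0 1)) (hD : 1 ≤ D)
    (hdbl : ∀ d ∈ Ioc (0 : ℝ) (1 / 2), v (1 - d) ≤ D * v (1 - 2 * d)) {m n : ℕ}
    (hmD : D ^ m * exp (1 - 2 ^ m) ≤ 1 / 2) (hn : n ≠ 0) (k : ℕ) {s : ℝ} (hs : 0 ≤ s)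
    (hsn : 1 / n ≤ 1 - s) (hreg : 1 ≤ 2 ^ (m + 1) * (2 ^ m) ^ k * (1 - s)) :
    ∫ r in (0 : ℝ)..s, r ^ (n - 1) / v r ≤ 2 * D ^ (m + 1) * s ^ n / (n * v s) := by
  have hC : D ^ (m + 1) ≤ 2 * D ^ (m + 1) := by
    linarith [pow_pos (zero_lt_one.trans_le hD) (m + 1)]
  induction k generalizing s with
  | zero =>
    rw [pow_zero, mul_one] at hreg
    exact integral_pow_sub_one_div_le_of_one_le_two_pow_mul hv_pos hv_mono (by linarith) hdbl
      hC hn hs hreg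
  | succ k ih =>
    by_cases hbase : 1 ≤ 2 ^ (m + 1) * (1 - s)
    · exact integral_pow_sub_one_div_le_of_one_le_two_pow_mul hv_pos hv_mono (by linarith) hdbl
        hC hn hs hbase
    have h2m : (1 : ℝ) ≤ 2 ^ m := one_le_pow₀ one_le_two
    have hδ : 0 ≤ 1 - s := (one_div_nonneg.2 n.cast_nonneg).trans hsn
    have hs' : 0 ≤ 1 - 2 ^ m * (1 - s) := by rw [pow_succ] at hbase; linarith
    refine integral_pow_sub_one_div_le_of_le_at_one_sub_two_pow_mul hv_pos hv_mono hD hdbl hmD hn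
      hsn hs' (ih hs' ?_ ?_)
    · nlinarith
    · calc 1 ≤ 2 ^ (m + 1) * (2 ^ m) ^ (k + 1) * (1 - s) := hreg
        _ = 2 ^ (m + 1) * (2 ^ m) ^ k * (1 - (1 - 2 ^ m * (1 - s))) := by ring

theorem integral_pow_sub_one_div_le_of_doubling
    (hv_pos : ∀ r ∈ Ico (0 : ℝ) 1, 0 < v r) (hv_mono : MonotoneOn v (Ico 0 1)) (hD : 1 ≤ D)
    (hdbl : ∀ d ∈ Ioc (0 : ℝ) (1 / 2), v (1 - d) ≤ D * v (1 - 2 * d)) {m n : ℕ} (hm : 1 ≤ m)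
    (hmD : D ^ m * exp (1 - 2 ^ m) ≤ 1 / 2) (hn : n ≠ 0) {s : ℝ} (hs : 0 ≤ s)
    (hsn : 1 / n ≤ 1 - s) :
    ∫ r in (0 : ℝ)..s, r ^ (n - 1) / v r ≤ 2 * D ^ (m + 1) * s ^ n / (n * v s) := by
  have hδ : 0 < 1 - s := (one_div_pos.2 (by positivity)).trans_le hsn
  have h2m : (1 : ℝ) < 2 ^ m := one_lt_pow₀ one_lt_two (by omega)
  obtain ⟨k, hk⟩ := pow_unbounded_of_one_lt (1 - s)⁻¹ h2m
  refine integral_pow_sub_one_div_le_of_one_le_two_pow_mul_pow hv_pos hv_mono hD hdbl hmD hn k hs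
    hsn ?_
  rw [inv_lt_iff_one_lt_mul₀ hδ] at hk
  have h2 : (1 : ℝ) ≤ 2 ^ (m + 1) := one_le_pow₀ one_le_two
  nlinarith

end Weight

theorem stmt_10_general
    (v : ℝ → ℝ)
    (hv_pos : ∀ r ∈ Set.Ico (0:ℝ) 1, 0 < v r)
    (hv_mono : StrictMonoOn v (Set.Ico (0:ℝ) 1))
    (D : ℝ) (hD : 1 < D)
    (hdbl : ∀ d ∈ Set.Ioc (0:ℝ) (1/2:ℝ), v (1 - d) ≤ D * v (1 - 2*d)) :
    ∃ C > 0, ∃ n₀ : ℕ, 1 ≤ n₀ ∧ ∀ n : ℕ, n₀ ≤ n →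
      ∀ s : ℝ, 0 < s → s ≤ 1 - 1/(n:ℝ) →
        (∫ r in (0:ℝ)..s, r ^ (n - 1) / v r) ≤ C * s ^ n / ((n : ℝ) * v s) := by
  obtain ⟨m, hm, hmD⟩ := exists_pow_mul_exp_one_sub_two_pow_le_half (by linarith : 0 ≤ D)
  refine ⟨2 * D ^ (m + 1), by positivity, 1, le_rfl, fun n hn s hs hsn => ?_⟩
  exact integral_pow_sub_one_div_le_of_doubling hv_pos hv_mono.monotoneOn hD.le hdbl hm hmD
    (by omega) hs.le (by linarith)

theorem stmt_10
    (v : ℝ → ℝ)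
    (hv_pos : ∀ r ∈ Set.Ico (0:ℝ) 1, 0 < v r)
    (hv_mono : StrictMonoOn v (Set.Ico (0:ℝ) 1))
    (hv_cont : ContinuousOn v (Set.Ico (0:ℝ) 1))
    (hv_zero : v 0 = 1)
    (hv_top : Filter.Tendsto v (nhdsWithin 1 (Set.Iio (1:ℝ))) Filter.atTop)
    (D : ℝ) (hD : 1 < D)
    (hdbl : ∀ d ∈ Set.Ioc (0:ℝ) (1/2:ℝ), v (1 - d) ≤ D * v (1 - 2*d)) :
    ∃ C > 0, ∃ n₀ : ℕ, 1 ≤ n₀ ∧ ∀ n : ℕ, n₀ ≤ n →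
      ∀ s : ℝ, 0 < s → s ≤ 1 - 1/(n:ℝ) →
        (∫ r in (0:ℝ)..s, r ^ (n - 1) / v r) ≤ C * s ^ n / ((n : ℝ) * v s) :=
  stmt_10_general v hv_pos hv_mono D hD hdbl
end
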